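/- arXiv:1911.11704 — 11 statements merged into one kernel-verified Lean document; each statement's English description precedes it below -/
import Mathlib

section
/- Let w₀, w₁ be two finite nonempty words with w₀w₁ ≠ w₁w₀, and define the morphism γ on {0,1}* by γ(0) = w₀, γ(1) = w₁, extended to infinite words. Then for an infinite binary word a, the infinite word γ(a) is ultimately periodic if and only if a is ultimately periodic. -/
/-!
The image of `y z^ω` is `γ(y) γ(z)^ω`. Conversely, let `q` be the first position where
`w₀w₁` and `w₁w₀` differ. Every word of `u{u,v}^ω` with `{u,v} = {w₀,w₁}` begins with the first
`q` letters of `uv`, so no infinite word lies in both `w₀{w₀,w₁}^ω` and `w₁{w₀,w₁}^ω`, and `γ` is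
injective on infinite words. If `γ(a)` has period `p` from position `n` on, two block boundaries
`|γ(a₀ ⋯ a_{k-1})| ≡ |γ(a₀ ⋯ a_{l-1})| (mod p)` with `n ≤ k < l` exist by pigeonhole; the suffixes
of `γ(a)` starting there coincide, so by injectivity `a` agrees with its shift by `l - k` from `k`
on.
-/

/-- `l` is a prefix of the infinite word `w`. -/
def IsPrefixOfInf {α : Type*} (l : List α) (w : ℕ → α) : Prop :=
  ∀ (i : ℕ) (h : i < l.length), l[i] = w i

/-- `b` is the image of the infinite word `a` under the morphism `γ`
(extended to infinite words by concatenation). -/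
def IsInfImage {α β : Type*} (γ : α → List β) (a : ℕ → α) (b : ℕ → β) : Prop :=
  ∀ n : ℕ, IsPrefixOfInf (((List.range n).map a).flatMap γ) b

/-- `w = y · z^ω`. -/
def UltPeriodicWith {α : Type*} (w : ℕ → α) (y z : List α) : Prop :=
  z ≠ [] ∧ ∀ m : ℕ, IsPrefixOfInf (y ++ (List.replicate m z).flatten) w

def UltimatelyPeriodic {α : Type*} (w : ℕ → α) : Prop :=
  ∃ y z : List α, UltPeriodicWith w y z

/-- `x` is a (finite, contiguous) factor of the infinite word `w`. -/
def InfFactorOf {α : Type*} (x : List α) (w : ℕ → α) : Prop :=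
  ∃ i : ℕ, x = List.ofFn fun j : Fin x.length => w (i + j)

/-- adherence of a language -/
def Adherence {α : Type*} (L : Set (List α)) : Set (ℕ → α) :=
  {x | ∀ n : ℕ, ∃ w ∈ L, (List.ofFn fun i : Fin n => x i) <+: w}

section Prefix
variable {α : Type*}

theorem isPrefixOfInf_map_range (w : ℕ → α) (n : ℕ) :
    IsPrefixOfInf ((List.range n).map w) w := by
  intro i hi
  simp

theorem IsPrefixOfInf.eq_map_range {l : List α} {w : ℕ → α} (h : IsPrefixOfInf l w) :
    l = (List.range l.length).map w :=
  List.ext_getElem (by simp) fun i hi _ => by simpa using h i hi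

theorem isPrefixOfInf_append {l₁ l₂ : List α} {w : ℕ → α} :
    IsPrefixOfInf (l₁ ++ l₂) w ↔
      IsPrefixOfInf l₁ w ∧ IsPrefixOfInf l₂ fun j => w (l₁.length + j) := by
  constructor
  · intro h
    refine ⟨fun i hi => ?_, fun j hj => ?_⟩
    · rw [← h i (by simp; omega), List.getElem_append_left hi]
    · rw [List.getElem_append_right' l₁ hj, h, add_comm]
  · rintro ⟨h₁, h₂⟩ i hi
    by_cases hi₁ : i < l₁.length
    · rw [List.getElem_append_left hi₁, h₁ i hi₁]
    · have hi₂ : i - l₁.length < l₂.length := by simp only [List.length_append] at hi; omega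
      rw [List.getElem_append_right (by omega), h₂ _ hi₂]
      exact congrArg w (by omega)

theorem IsPrefixOfInf.take_eq {l : List α} {w : ℕ → α} (h : IsPrefixOfInf l w) {q : ℕ}
    (hq : q ≤ l.length) : l.take q = (List.range q).map w := by
  rw [← List.take_append_drop q l, isPrefixOfInf_append] at h
  simpa [hq] using h.1.eq_map_range

end Prefix

section Periodic
variable {α : Type*}

theorem apply_eq_of_modEq {w : ℕ → α} {n p : ℕ} (hper : ∀ i, n ≤ i → w (i + p) = w i)
    {i j : ℕ} (hi : n ≤ i) (hij : i ≤ j) (h : i ≡ j [MOD p]) : w j = w i := by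
  obtain ⟨t, ht⟩ := (Nat.modEq_iff_dvd' hij).mp h
  obtain rfl : j = i + p * t := by omega
  clear h hij ht
  induction t with
  | zero => simp
  | succ t ih => rw [Nat.mul_succ, ← add_assoc, hper _ (by omega), ih]

theorem ultimatelyPeriodic_iff {w : ℕ → α} :
    UltimatelyPeriodic w ↔ ∃ n p, 0 < p ∧ ∀ i, n ≤ i → w (i + p) = w i := by
  constructor
  · rintro ⟨y, z, hz, h⟩
    refine ⟨y.length, z.length, List.length_pos_iff.mpr hz, fun i hi => ?_⟩
    set m := i - y.length + 1
    -- `y z^(m+1)` is both `(y z) z^m` and `y z^m z`: `z^m` sits at offsets `|y| + |z|` and `|y|`.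
    have h_late := h (m + 1)
    rw [List.replicate_succ, List.flatten_cons, ← List.append_assoc, isPrefixOfInf_append]
      at h_late
    have h_early := h (m + 1)
    rw [List.replicate_succ', List.flatten_append, ← List.append_assoc, isPrefixOfInf_append,
      isPrefixOfInf_append] at h_early
    have hj : i - y.length < ((List.replicate m z).flatten).length := by
      simp only [List.length_flatten, List.map_replicate, List.sum_replicate, smul_eq_mul]
      exact (Nat.lt_succ_self _).trans_le
        (Nat.le_mul_of_pos_right m (List.length_pos_iff.mpr hz))
    have e₁ := h_late.2 _ hj
    have e₂ := h_early.1.2 _ hj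
    simp only [List.length_append] at e₁ e₂
    rw [e₁] at e₂
    convert e₂ using 2 <;> omega
  · rintro ⟨n, p, hp, hper⟩
    refine ⟨(List.range n).map w, (List.range p).map fun i => w (n + i), by simpa using hp.ne',
      fun m => isPrefixOfInf_append.mpr ⟨isPrefixOfInf_map_range w n, ?_⟩⟩
    simp only [List.length_map, List.length_range]
    induction m with
    | zero => simp [IsPrefixOfInf]
    | succ m ih =>
      rw [List.replicate_succ, List.flatten_cons, isPrefixOfInf_append]
      refine ⟨isPrefixOfInf_map_range _ p, ?_⟩
      convert ih using 2 with j
      simp only [List.length_map, List.length_range]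
      rw [← hper (n + j) (by omega)]
      ring_nf

theorem ultimatelyPeriodic_of_shift_eq {w : ℕ → α} {k l : ℕ} (hkl : k ≠ l)
    (h : (fun i => w (k + i)) = fun i => w (l + i)) : UltimatelyPeriodic w := by
  wlog hlt : k < l generalizing k l
  · exact this hkl.symm h.symm (by omega)
  refine ultimatelyPeriodic_iff.mpr ⟨k, l - k, by omega, fun i hi => ?_⟩
  have := congrFun h (i - k)
  rw [show k + (i - k) = i by omega, show l + (i - k) = i + (l - k) by omega] at this
  exact this.symm

end Periodic

section Image
variable {α β : Type*} {γ : α → List β} {a : ℕ → α} {b : ℕ → β}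

theorem length_le_length_flatMap (hγ : ∀ x, γ x ≠ []) (l : List α) :
    l.length ≤ (l.flatMap γ).length := by
  induction l with
  | nil => simp
  | cons x l ih =>
    simp only [List.flatMap_cons, List.length_append, List.length_cons]
    have := List.length_pos_iff.mpr (hγ x)
    omega

theorem flatMap_flatten_replicate (γ : α → List β) (z : List α) (m : ℕ) :
    (List.replicate m z).flatten.flatMap γ = (List.replicate m (z.flatMap γ)).flatten := by
  induction m with
  | zero => simp
  | succ m ih => simp [List.replicate_succ, ih]

theorem IsInfImage.isPrefixOfInf_flatMap (hb : IsInfImage γ a b) {l : List α}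
    (hl : IsPrefixOfInf l a) : IsPrefixOfInf (l.flatMap γ) b := by
  rw [hl.eq_map_range]
  exact hb _

theorem IsInfImage.shift (hb : IsInfImage γ a b) (k : ℕ) :
    IsInfImage γ (fun i => a (k + i))
      (fun j => b ((((List.range k).map a).flatMap γ).length + j)) := fun n => by
  have := hb (k + n)
  rw [List.range_add, List.map_append, List.flatMap_append, isPrefixOfInf_append,
    List.map_map] at this
  exact this.2

theorem UltimatelyPeriodic.infImage (hγ : ∀ x, γ x ≠ []) (hb : IsInfImage γ a b)
    (ha : UltimatelyPeriodic a) : UltimatelyPeriodic b := by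
  obtain ⟨y, z, hz, h⟩ := ha
  refine ⟨y.flatMap γ, z.flatMap γ, ?_, fun m => ?_⟩
  · exact List.ne_nil_of_length_pos
      ((List.length_pos_iff.mpr hz).trans_le (length_le_length_flatMap hγ z))
  · have := hb.isPrefixOfInf_flatMap (h m)
    rwa [List.flatMap_append, flatMap_flatten_replicate] at this

end Image

section TwoBlocks
variable {α β : Type*}

theorem List.exists_take_pred_eq_and_take_ne {l₁ l₂ : List β} (hlen : l₁.length = l₂.length)
    (hne : l₁ ≠ l₂) :
    ∃ q ≤ l₁.length, l₁.take (q - 1) = l₂.take (q - 1) ∧ l₁.take q ≠ l₂.take q := by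
  classical
  have hfull : l₁.take l₁.length ≠ l₂.take l₁.length := by
    rwa [List.take_of_length_le le_rfl, List.take_of_length_le hlen.ge]
  have hex : ∃ q, l₁.take q ≠ l₂.take q := ⟨_, hfull⟩
  have hq₀ : 0 < Nat.find hex := (Nat.find_pos hex).mpr (by simp)
  exact ⟨Nat.find hex, Nat.find_min' hex hfull, not_not.mp (Nat.find_min hex (by omega)),
    Nat.find_spec hex⟩

theorem take_append_flatten_eq {u v : List β} (hu : u ≠ []) {L : List (List β)}
    (hL : ∀ x ∈ L, x = u ∨ x = v) {q : ℕ} (hq : q ≤ (u ++ v).length)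
    (hlen : q ≤ (u ++ L.flatten).length)
    (hpre : (u ++ v).take (q - 1) = (v ++ u).take (q - 1)) :
    (u ++ L.flatten).take q = (u ++ v).take q := by
  induction L generalizing q with
  | nil =>
    simp only [List.flatten_nil, List.append_nil] at hlen ⊢
    rw [List.take_append_of_le_length hlen]
  | cons x L ih =>
    have hpre' : ∀ r ≤ q - 1, (u ++ v).take r = (v ++ u).take r := fun r hr => by
      simpa [List.take_take, hr] using congrArg (List.take r) hpre
    have hu₁ := List.length_pos_iff.mpr hu
    rcases hL x List.mem_cons_self with rfl | rfl
    · -- `u L` agrees with `u v`, hence with `v u`, before `q - |u|`, so `u (u L)` with `u v u`.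
      simp only [List.flatten_cons, List.length_append] at hlen ⊢
      rw [List.take_append,
        ih (fun y hy => hL y (List.mem_cons_of_mem _ hy)) (by simp at hq ⊢; omega)
          (by simp only [List.length_append]; omega) (hpre' _ (by omega)),
        hpre' _ (by omega), ← List.take_append, ← List.append_assoc,
        List.take_append_of_le_length hq]
    · rw [List.flatten_cons, ← List.append_assoc, List.take_append_of_le_length hq]

theorem IsInfImage.map_range_eq_take {γ : α → List β} {a : ℕ → α} {b : ℕ → β}
    (hγ : ∀ x, γ x ≠ []) {u v : List β} (huv : ∀ x, γ x = u ∨ γ x = v)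
    (hb : IsInfImage γ a b) (ha : γ (a 0) = u) {q : ℕ} (hq : q ≤ (u ++ v).length)
    (hpre : (u ++ v).take (q - 1) = (v ++ u).take (q - 1)) :
    (List.range q).map b = (u ++ v).take q := by
  set L := ((List.range q).map fun i => γ (a (i + 1)))
  have hsplit : ((List.range (q + 1)).map a).flatMap γ = u ++ L.flatten := by
    simp [L, List.range_succ_eq_map, ha, List.flatMap_def, Function.comp_def]
  have hlen : q ≤ (u ++ L.flatten).length := by
    have := length_le_length_flatMap hγ ((List.range (q + 1)).map a)
    simp only [List.length_map, List.length_range, hsplit] at this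
    omega
  have hL : ∀ x ∈ L, x = u ∨ x = v := by
    simp only [L, List.mem_map]
    rintro _ ⟨i, -, rfl⟩
    exact huv _
  rw [← take_append_flatten_eq (ha ▸ hγ (a 0)) hL hq hlen hpre, ← hsplit]
  exact ((hb (q + 1)).take_eq (hsplit ▸ hlen)).symm

end TwoBlocks

section TwoLetters
variable {β : Type*} {γ : Fin 2 → List β}

theorem IsInfImage.apply_zero_eq (hγ : ∀ x, γ x ≠ []) (hcomm : γ 0 ++ γ 1 ≠ γ 1 ++ γ 0)
    {a a' : ℕ → Fin 2} {b : ℕ → β} (ha : IsInfImage γ a b) (ha' : IsInfImage γ a' b) :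
    a 0 = a' 0 := by
  obtain ⟨q, hq, hpre, hne⟩ :=
    List.exists_take_pred_eq_and_take_ne (by simp [add_comm]) hcomm
  have hsep : ∀ {c c' : ℕ → Fin 2}, IsInfImage γ c b → IsInfImage γ c' b → c 0 = 0 → c' 0 = 1 →
      False := fun {c c'} hc hc' h₀ h₁ => by
    have e₀ := hc.map_range_eq_take hγ (u := γ 0) (v := γ 1) (fun x => by fin_cases x <;> simp)
      (by rw [h₀]) hq hpre
    have e₁ := hc'.map_range_eq_take hγ (u := γ 1) (v := γ 0) (fun x => by fin_cases x <;> simp)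
      (by rw [h₁]) (by simpa [add_comm] using hq) hpre.symm
    exact hne (e₀.symm.trans e₁)
  have hbin : ∀ x : Fin 2, x = 0 ∨ x = 1 := by decide
  rcases hbin (a 0) with h | h <;> rcases hbin (a' 0) with h' | h'
  · rw [h, h']
  · exact (hsep ha ha' h h').elim
  · exact (hsep ha' ha h' h).elim
  · rw [h, h']

theorem IsInfImage.unique_preimage (hγ : ∀ x, γ x ≠ []) (hcomm : γ 0 ++ γ 1 ≠ γ 1 ++ γ 0)
    {a a' : ℕ → Fin 2} {b : ℕ → β} (ha : IsInfImage γ a b) (ha' : IsInfImage γ a' b) :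
    a = a' := by
  funext n
  induction n generalizing a a' b with
  | zero => exact ha.apply_zero_eq hγ hcomm ha'
  | succ n ih =>
    have h₀ := ha.apply_zero_eq hγ hcomm ha'
    have hshift := ha'.shift 1
    simp only [List.range_one, List.map_singleton, ← h₀] at hshift
    simpa [add_comm] using ih (ha.shift 1) hshift

theorem UltimatelyPeriodic.of_infImage (hγ : ∀ x, γ x ≠ []) (hcomm : γ 0 ++ γ 1 ≠ γ 1 ++ γ 0)
    {a : ℕ → Fin 2} {b : ℕ → β} (hb : IsInfImage γ a b) (hper : UltimatelyPeriodic b) :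
    UltimatelyPeriodic a := by
  obtain ⟨n, p, hp, hper⟩ := ultimatelyPeriodic_iff.mp hper
  set N := fun k => (((List.range k).map a).flatMap γ).length
  have hN : ∀ k, k ≤ N k := fun k => by
    simpa only [List.length_map, List.length_range] using
      length_le_length_flatMap hγ ((List.range k).map a)
  have : NeZero p := ⟨hp.ne'⟩
  obtain ⟨k, l, hkl, hmod⟩ := Finite.exists_ne_map_eq_of_infinite fun k => (N (n + k) : ZMod p)
  wlog hNkl : N (n + k) ≤ N (n + l) generalizing k l
  · exact this l k hkl.symm hmod.symm (by omega)
  have hmod' : N (n + k) ≡ N (n + l) [MOD p] := (ZMod.natCast_eq_natCast_iff _ _ _).mp hmod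
  have hsuffix : (fun j => b (N (n + l) + j)) = fun j => b (N (n + k) + j) := funext fun j =>
    apply_eq_of_modEq hper (by have := hN (n + k); omega) (by omega) (hmod'.add_right j)
  have hshift : IsInfImage γ (fun i => a (n + l + i)) fun j => b (N (n + k) + j) :=
    hsuffix ▸ hb.shift (n + l)
  exact ultimatelyPeriodic_of_shift_eq (by omega : n + k ≠ n + l)
    ((hb.shift (n + k)).unique_preimage hγ hcomm hshift)

end TwoLetters

theorem stmt4 {β : Type*} (w0 w1 : List β) (h0 : w0 ≠ []) (h1 : w1 ≠ [])
    (hnc : w0 ++ w1 ≠ w1 ++ w0) (a : ℕ → Fin 2) (b : ℕ → β)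
    (hb : IsInfImage (![w0, w1]) a b) :
    UltimatelyPeriodic b ↔ UltimatelyPeriodic a := by
  have hγ : ∀ x, ![w0, w1] x ≠ [] := fun x => by fin_cases x <;> assumption
  exact ⟨UltimatelyPeriodic.of_infImage hγ hnc hb, UltimatelyPeriodic.infImage hγ hb⟩
end

section
/- If y and z are two infinite binary words with y beginning with 0 and z beginning with 1, γ is the morphism γ(0) = w₀, γ(1) = w₁ with w₀, w₁ nonempty, and γ(y) = γ(z) as infinite words, then w₀ and w₁ commute: w₀w₁ = w₁w₀. -/
/-! Say `|w₀| ≤ |w₁|`; both words are prefixes of `b`, so `w₁ = w₀ t`. Deleting the prefix `w₀`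
from `b` and reading each block `w₀ t` as `w₀ · t` turns the two factorizations of `b` into
factorizations of a new word over `{w₀, t}`, one beginning with `w₀` and one with `t`. By
induction on `|w₀| + |w₁|` the words `w₀` and `t` commute, hence so do `w₀` and `w₁ = w₀ t`. -/

open Computability

section

variable {α β : Type*}

namespace IsPrefixOfInf

theorem of_prefix {p q : List β} {b : ℕ → β} (h : IsPrefixOfInf p b) (hq : q <+: p) :
    IsPrefixOfInf q b := by
  obtain ⟨r, rfl⟩ := hq
  intro i hi
  rw [← List.getElem_append_left hi]
  exact h i (by rw [List.length_append]; omega)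

theorem prefix_of_length_le {p q : List β} {b : ℕ → β} (hp : IsPrefixOfInf p b)
    (hq : IsPrefixOfInf q b) (h : p.length ≤ q.length) : p <+: q := by
  rw [List.prefix_iff_eq_take]
  refine List.ext_getElem (by simp [h]) fun i h1 _ => ?_
  rw [List.getElem_take, hp i h1, hq i (by omega)]

theorem of_append {p q : List β} {b : ℕ → β} (h : IsPrefixOfInf (p ++ q) b) :
    IsPrefixOfInf q fun i => b (p.length + i) := by
  intro i hi
  have := h (p.length + i) (by rw [List.length_append]; omega)
  simpa [List.getElem_append_right] using this

end IsPrefixOfInf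

theorem List.le_length_flatMap {l : List α} {f : α → List β} (hf : ∀ a, f a ≠ []) :
    l.length ≤ (l.flatMap f).length := by
  induction l with
  | nil => simp
  | cons a l ih => simpa [Nat.add_comm] using Nat.add_le_add ih (List.length_pos_iff.mpr (hf a))

namespace Language

theorem mem_kstar_of_mem {l : Language β} {x : List β} (h : x ∈ l) : x ∈ l∗ :=
  (le_kstar : l ≤ l∗) h

theorem append_mem_kstar {l : Language β} {x y : List β} (hx : x ∈ l∗) (hy : y ∈ l∗) :
    x ++ y ∈ l∗ := by
  rw [← kstar_mul_kstar]
  exact append_mem_mul hx hy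

theorem pair_comm (x y : List β) : ({x, y} : Language β) = {y, x} :=
  Set.pair_comm x y

variable {u t : List β}

theorem kstar_pair_append_le : ({u, u ++ t} : Language β)∗ ≤ ({u, t} : Language β)∗ := by
  rw [← kstar_idem ({u, t} : Language β)]
  refine kstar_mono ?_
  rintro x (rfl | rfl)
  · exact mem_kstar_of_mem (Or.inl rfl)
  · exact append_mem_kstar (mem_kstar_of_mem (Or.inl rfl)) (mem_kstar_of_mem (Or.inr rfl))

theorem exists_append_of_mem_kstar_pair_append {w : List β}
    (hw : w ∈ ({u, u ++ t} : Language β)∗) (hne : w ≠ []) :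
    ∃ w' ∈ ({u, t} : Language β)∗, w = u ++ w' := by
  obtain ⟨_ | ⟨x, L⟩, rfl, hL⟩ := mem_kstar.mp hw
  · exact absurd rfl hne
  have hrest : L.flatten ∈ ({u, t} : Language β)∗ :=
    kstar_pair_append_le (join_mem_kstar fun y hy => hL y (List.mem_cons_of_mem x hy))
  rcases hL x List.mem_cons_self with rfl | rfl
  · exact ⟨L.flatten, hrest, rfl⟩
  · exact ⟨t ++ L.flatten, append_mem_kstar (mem_kstar_of_mem (Or.inr rfl)) hrest, by simp⟩

end Language

/-- The finitary form of `b ∈ p · L^ω`. -/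
def StartsWithStar (L : Language β) (p : List β) (b : ℕ → β) : Prop :=
  ∀ n, ∃ w ∈ L∗, n ≤ w.length ∧ IsPrefixOfInf (p ++ w) b

namespace StartsWithStar

theorem isPrefixOfInf {L : Language β} {p : List β} {b : ℕ → β} (h : StartsWithStar L p b) :
    IsPrefixOfInf p b := by
  obtain ⟨w, -, -, hw⟩ := h 0
  exact hw.of_prefix (List.prefix_append p w)

variable {u t : List β} {b : ℕ → β}

theorem shift_left (hu : u ≠ []) (h : StartsWithStar {u, u ++ t} u b) :
    StartsWithStar {u, t} u fun i => b (u.length + i) := by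
  intro n
  obtain ⟨w, hw, hlen, hpre⟩ := h (n + u.length)
  have hne : w ≠ [] := List.ne_nil_of_length_pos (by grind [List.length_pos_iff])
  obtain ⟨w', hw', rfl⟩ := Language.exists_append_of_mem_kstar_pair_append hw hne
  rw [List.length_append] at hlen
  exact ⟨w', hw', by omega, hpre.of_append⟩

theorem shift_right (h : StartsWithStar {u, u ++ t} (u ++ t) b) :
    StartsWithStar {u, t} t fun i => b (u.length + i) := by
  intro n
  obtain ⟨w, hw, hlen, hpre⟩ := h n
  rw [List.append_assoc] at hpre
  exact ⟨w, Language.kstar_pair_append_le hw, hlen, hpre.of_append⟩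

end StartsWithStar

theorem IsInfImage.startsWithStar {γ : α → List β} {a : ℕ → α} {b : ℕ → β}
    (h : IsInfImage γ a b) (hγ : ∀ i, γ i ≠ []) :
    StartsWithStar (Set.range γ) (γ (a 0)) b := by
  intro n
  refine ⟨((List.range n).map fun i => a (i + 1)).flatMap γ, ?_, ?_, ?_⟩
  · refine Language.mem_kstar.mpr ⟨_, rfl, ?_⟩
    simp only [List.mem_map]
    rintro _ ⟨_, _, rfl⟩
    exact Set.mem_range_self _
  · simpa using List.le_length_flatMap (l := (List.range n).map fun i => a (i + 1)) hγ
  · simpa [List.range_succ_eq_map, List.map_map, Function.comp_def] using h (n + 1)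

theorem append_comm_of_startsWithStar (u v : List β) (b : ℕ → β) (hu : u ≠ []) (hv : v ≠ [])
    (hub : StartsWithStar {u, v} u b) (hvb : StartsWithStar {u, v} v b) : u ++ v = v ++ u := by
  induction hn : u.length + v.length using Nat.strong_induction_on generalizing u v b with
  | _ n ih =>
  wlog hle : u.length ≤ v.length generalizing u v
  · rw [Language.pair_comm] at hub hvb
    exact (this v u hv hu hvb hub (by omega) (by omega)).symm
  obtain ⟨t, rfl⟩ := hub.isPrefixOfInf.prefix_of_length_le hvb.isPrefixOfInf hle
  rcases eq_or_ne t [] with rfl | ht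
  · simp
  have hlt : u.length + t.length < n := by
    have := List.length_pos_iff.mpr hu
    rw [← hn, List.length_append]
    omega
  have hcomm : u ++ t = t ++ u :=
    ih _ hlt u t _ hu ht (hub.shift_left hu) hvb.shift_right rfl
  rw [List.append_assoc, hcomm]

end

theorem stmt6 {β : Type*} (w0 w1 : List β) (h0 : w0 ≠ []) (h1 : w1 ≠ [])
    (y z : ℕ → Fin 2) (hy0 : y 0 = 0) (hz0 : z 0 = 1) (b : ℕ → β)
    (hyb : IsInfImage (![w0, w1]) y b) (hzb : IsInfImage (![w0, w1]) z b) :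
    w0 ++ w1 = w1 ++ w0 := by
  have hγ : ∀ i, ![w0, w1] i ≠ [] := fun i => by fin_cases i <;> assumption
  have hy := hyb.startsWithStar hγ
  have hz := hzb.startsWithStar hγ
  rw [Matrix.range_cons_cons_empty, hy0] at hy
  rw [Matrix.range_cons_cons_empty, hz0] at hz
  exact append_comm_of_startsWithStar w0 w1 b h0 h1 hy hz
end

section
/- If L is an infinite regular language over a finite alphabet, then adh(L) is nonempty; moreover adh(L) contains an ultimately periodic infinite word. -/
/-! An infinite regular language contains words longer than the number of states of a DFA
accepting it, so the pumping lemma yields `a`, `b ≠ []`, `c` with `a bᵐ c ∈ L` for every `m`.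
Every prefix of `a b^ω` is a prefix of some `a bᵐ`, hence of `a bᵐ c ∈ L`. -/

theorem isPrefixOfInf_appendStream {α : Type*} (l : List α) (s : Stream' α) :
    IsPrefixOfInf l (l ++ₛ s) :=
  fun _ h => (Stream'.get_append_left _ _ _ h).symm

theorem ofFn_prefix_of_isPrefixOfInf {α : Type*} {l : List α} {w : ℕ → α} {n : ℕ}
    (h : IsPrefixOfInf l w) (hn : n ≤ l.length) : (List.ofFn fun i : Fin n => w i) <+: l := by
  have : (List.ofFn fun i : Fin n => w i) = l.take n :=
    List.ext_getElem (by simp [hn]) fun i hi _ => by simp [h i (by simp at hi; omega)]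
  exact this ▸ List.take_prefix n l

theorem le_length_flatten_replicate {α : Type*} {z : List α} (hz : z ≠ []) (m : ℕ) :
    m ≤ (List.replicate m z).flatten.length := by
  simpa using Nat.le_mul_of_pos_right m (List.length_pos_iff.mpr hz)

theorem Stream'.cycle_eq_flatten_replicate_append {α : Type*} (z : List α) (hz : z ≠ []) (m : ℕ) :
    Stream'.cycle z hz = (List.replicate m z).flatten ++ₛ Stream'.cycle z hz := by
  induction m with
  | zero => rfl
  | succ m ih =>
    rw [List.replicate_succ', List.flatten_append, Stream'.append_append_stream]
    simpa [← Stream'.cycle_eq] using ih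

theorem ultPeriodicWith_appendStream_cycle {α : Type*} (y z : List α) (hz : z ≠ []) :
    UltPeriodicWith (y ++ₛ Stream'.cycle z hz) y z := by
  refine ⟨hz, fun m => ?_⟩
  rw [Stream'.cycle_eq_flatten_replicate_append z hz m, ← Stream'.append_append_stream]
  exact isPrefixOfInf_appendStream _ _

theorem appendStream_cycle_mem_adherence {α : Type*} {L : Set (List α)} {y z c : List α}
    (hz : z ≠ []) (hL : ∀ m, y ++ (List.replicate m z).flatten ++ c ∈ L) :
    (y ++ₛ Stream'.cycle z hz : ℕ → α) ∈ Adherence L := by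
  intro n
  refine ⟨_, hL n, List.IsPrefix.trans ?_ (List.prefix_append _ c)⟩
  refine ofFn_prefix_of_isPrefixOfInf ((ultPeriodicWith_appendStream_cycle y z hz).2 n) ?_
  simpa using (le_length_flatten_replicate hz n).trans (Nat.le_add_left _ y.length)

theorem Set.Infinite.exists_le_length {α : Type*} [Finite α] {S : Set (List α)}
    (hS : S.Infinite) (n : ℕ) : ∃ u ∈ S, n ≤ u.length := by
  by_contra! h
  exact hS ((List.finite_length_lt α n).subset fun u hu => h u hu)

theorem Language.IsRegular.exists_pumping_of_infinite {α : Type*} [Finite α] {L : Language α}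
    (hreg : L.IsRegular) (hinf : (L : Set (List α)).Infinite) :
    ∃ a b c : List α, b ≠ [] ∧ ∀ m, a ++ (List.replicate m b).flatten ++ c ∈ L := by
  obtain ⟨σ, _, M, rfl⟩ := hreg
  obtain ⟨u, hu, hlen⟩ := hinf.exists_le_length (Fintype.card σ)
  obtain ⟨a, b, c, -, -, hb, hpump⟩ := M.pumping_lemma hu hlen
  refine ⟨a, b, c, hb, fun m => hpump ?_⟩
  refine Language.mem_mul.mpr ⟨_, Language.mem_mul.mpr ⟨a, rfl, _, ?_, rfl⟩, c, rfl, rfl⟩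
  exact Language.join_mem_kstar fun w hw => (List.eq_of_mem_replicate hw).symm ▸ rfl

theorem stmt8 {α : Type*} [Fintype α] (L : Language α)
    (hreg : L.IsRegular) (hinf : Set.Infinite (L : Set (List α))) :
    (Adherence (L : Set (List α))).Nonempty ∧
      ∃ x ∈ Adherence (L : Set (List α)), UltimatelyPeriodic x := by
  obtain ⟨a, b, c, hb, hpump⟩ := hreg.exists_pumping_of_infinite hinf
  have hadh := appendStream_cycle_mem_adherence hb hpump
  exact ⟨⟨_, hadh⟩, _, hadh, a, b, ultPeriodicWith_appendStream_cycle a b hb⟩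
end

section
/- If a regular language L has polynomial growth (there exists k such that the number of words of length n in L is O(n^k)), then adh(L) is countable and every element of adh(L) is ultimately periodic. -/
/-!
Run a DFA for `L` along `x ∈ adh(L)` and pick a state `q` visited infinitely often; `q` is
reachable and, since every prefix of `x` extends to a word of `L`, co-reachable. Any two cycles
`u`, `v` at `q` commute: otherwise `uv ≠ vu` have the same length, and the `2^m` words `p w s`
with `w ∈ {uv, vu}^m` would contradict polynomial growth. So every segment of `x` between two
visits of `q` after the first one commutes with a fixed nonempty cycle `u`, hence begins with any
power of `u`, and `x = y · u^ω`. An ultimately periodic word is determined by the pair `(y, u)`,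
so there are only countably many of them.
-/

section

variable {α : Type*}

def infSegment (x : ℕ → α) (i n : ℕ) : List α :=
  List.ofFn fun j : Fin n => x (i + j)

theorem infSegment_add (x : ℕ → α) (i m n : ℕ) :
    infSegment x i (m + n) = infSegment x i m ++ infSegment x (i + m) n := by
  simp only [infSegment, List.ofFn_add, Fin.val_castLE, Fin.val_natAdd, add_assoc]

theorem length_infSegment (x : ℕ → α) (i n : ℕ) : (infSegment x i n).length = n :=
  List.length_ofFn

theorem infSegment_zero (x : ℕ → α) (n : ℕ) :
    infSegment x 0 n = List.ofFn fun j : Fin n => x j := by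
  simp [infSegment]

theorem isPrefixOfInf_infSegment_zero (x : ℕ → α) (n : ℕ) :
    IsPrefixOfInf (infSegment x 0 n) x := by
  intro i hi
  simp [infSegment]

theorem IsPrefixOfInf.of_prefix_s9 {l l' : List α} {x : ℕ → α} (h : l <+: l')
    (h' : IsPrefixOfInf l' x) : IsPrefixOfInf l x := by
  intro i hi
  rw [← h' i (hi.trans_le h.length_le), h.getElem]

namespace List

theorem append_flatten_replicate_comm {P u : List α} (h : P ++ u = u ++ P) (m : ℕ) :
    P ++ (replicate m u).flatten = (replicate m u).flatten ++ P := by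
  induction m with
  | zero => simp
  | succ m ih =>
    rw [replicate_succ, flatten_cons, ← append_assoc, h, append_assoc, ih, append_assoc]

theorem flatten_replicate_prefix_of_append_comm {P u : List α} (h : P ++ u = u ++ P) {m : ℕ}
    (hm : m * u.length ≤ P.length) : (replicate m u).flatten <+: P :=
  prefix_of_prefix_length_le (l₃ := P ++ (replicate m u).flatten)
    (by rw [append_flatten_replicate_comm h]; exact prefix_append _ _)
    (prefix_append _ _) (by simpa using hm)

theorem flatten_ofFn_ite_injective {U V : List α} (hne : U ≠ V) (hlen : U.length = V.length) :
    ∀ m, Function.Injective fun f : Fin m → Bool => (ofFn fun i => if f i then U else V).flatten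
  | 0 => fun f g _ => funext (Fin.elim0 ·)
  | m + 1 => by
    intro f g hfg
    simp only [ofFn_succ, flatten_cons] at hfg
    obtain ⟨hhead, htail⟩ := append_inj hfg (by split_ifs <;> simp [hlen])
    have h0 : f 0 = g 0 := by
      revert hhead; cases f 0 <;> cases g 0 <;> simp [hne, Ne.symm hne]
    have hsucc := flatten_ofFn_ite_injective hne hlen m htail
    exact funext (Fin.cases h0 (congrFun hsucc))

end List

open Filter Topology in
theorem exists_mul_succ_pow_lt_two_pow (E k : ℕ) : ∃ m, E * (m + 1) ^ k < 2 ^ m := by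
  have hlim : Tendsto (fun m : ℕ => 2 * (((m + 1 : ℕ) : ℝ) ^ k / 2 ^ (m + 1))) atTop (𝓝 0) := by
    simpa using ((tendsto_pow_const_div_const_pow_of_one_lt k one_lt_two).comp
      (tendsto_add_atTop_nat 1)).const_mul 2
  obtain ⟨m, hm⟩ := (hlim.eventually (gt_mem_nhds (by positivity : (0 : ℝ) < 1 / (E + 1)))).exists
  refine ⟨m, ?_⟩
  have hm' : ((m : ℝ) + 1) ^ k * (E + 1) < 2 ^ m := by
    rw [pow_succ, ← div_div, mul_div_cancel₀ _ two_ne_zero, div_lt_div_iff₀ (by positivity)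
      (by positivity)] at hm
    push_cast at hm
    linarith
  have hreal : (E : ℝ) * (m + 1) ^ k < 2 ^ m := by
    nlinarith [pow_nonneg (by positivity : (0 : ℝ) ≤ m + 1) k]
  exact_mod_cast hreal

namespace Language

def HasPolyGrowth (L : Language α) : Prop :=
  ∃ k C : ℕ, ∀ n : ℕ, {w ∈ (L : Set (List α)) | w.length = n}.ncard ≤ C * (n + 1) ^ k

theorem two_pow_le_ncard [Finite α] {L : Language α} {p s U V : List α} (hne : U ≠ V)
    (hlen : U.length = V.length) (m : ℕ)
    (hmem : ∀ f : Fin m → Bool, p ++ (List.ofFn fun i => if f i then U else V).flatten ++ s ∈ L) :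
    2 ^ m ≤ {w ∈ (L : Set (List α)) | w.length = p.length + m * U.length + s.length}.ncard := by
  have hinj := List.flatten_ofFn_ite_injective hne hlen m
  have hblock : ∀ b : Bool, (if b then U else V).length = U.length := by
    intro b; cases b <;> simp [hlen]
  calc 2 ^ m = (Set.univ : Set (Fin m → Bool)).ncard := by simp
    _ ≤ _ := Set.ncard_le_ncard_of_injOn (t := {w ∈ (L : Set (List α)) |
          w.length = p.length + m * U.length + s.length})
          (fun f => p ++ (List.ofFn fun i => if f i then U else V).flatten ++ s)
          (fun f _ => ⟨hmem f, by simp [List.length_flatten, Function.comp_def, hblock]; ring⟩)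
          (fun f _ g _ hfg => hinj (by simpa using hfg))
          ((List.finite_length_eq α _).subset fun _ hw => hw.2)

theorem HasPolyGrowth.eq_of_forall_mem [Finite α] {L : Language α} (hL : L.HasPolyGrowth)
    {p s U V : List α} (hlen : U.length = V.length)
    (hmem : ∀ m (f : Fin m → Bool),
      p ++ (List.ofFn fun i => if f i then U else V).flatten ++ s ∈ L) :
    U = V := by
  by_contra hne
  obtain ⟨k, C, hC⟩ := hL
  obtain ⟨D, hD⟩ : ∃ D, D = p.length + s.length + U.length + 1 := ⟨_, rfl⟩
  obtain ⟨m, hm⟩ := exists_mul_succ_pow_lt_two_pow (C * D ^ k) k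
  have hlenD : p.length + m * U.length + s.length + 1 ≤ D * (m + 1) := by rw [hD]; nlinarith
  have hlower := two_pow_le_ncard hne hlen m (hmem m)
  have hupper := hC (p.length + m * U.length + s.length)
  have hpoly : C * (p.length + m * U.length + s.length + 1) ^ k ≤ C * D ^ k * (m + 1) ^ k := by
    rw [mul_assoc, ← mul_pow]; gcongr
  omega

end Language

theorem UltPeriodicWith.eq {w w' : ℕ → α} {y z : List α} (h : UltPeriodicWith w y z)
    (h' : UltPeriodicWith w' y z) : w = w' := by
  funext n
  have hn : n < (y ++ (List.replicate (n + 1) z).flatten).length := by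
    have := List.length_pos_iff.mpr h.1
    simp [List.length_flatten]
    nlinarith
  rw [← h.2 (n + 1) n hn, h'.2 (n + 1) n hn]

theorem countable_setOf_ultimatelyPeriodic [Countable α] :
    {w : ℕ → α | UltimatelyPeriodic w}.Countable := by
  have hsub : {w : ℕ → α | UltimatelyPeriodic w}
      ⊆ ⋃ yz : List α × List α, {w | UltPeriodicWith w yz.1 yz.2} :=
    fun w ⟨y, z, h⟩ => Set.mem_iUnion.mpr ⟨(y, z), h⟩
  refine (Set.countable_iUnion fun yz => ?_).mono hsub
  exact Set.Subsingleton.countable fun w hw w' hw' => hw.eq hw'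

theorem ultPeriodicWith_of_frequently_append_comm {x : ℕ → α} {n : ℕ} {u : List α} (hu : u ≠ [])
    (h : ∀ N, ∃ d ≥ N, infSegment x n d ++ u = u ++ infSegment x n d) :
    UltPeriodicWith x (infSegment x 0 n) u := by
  refine ⟨hu, fun m => ?_⟩
  obtain ⟨d, hd, hcomm⟩ := h (m * u.length)
  have hpow : (List.replicate m u).flatten <+: infSegment x n d :=
    List.flatten_replicate_prefix_of_append_comm hcomm (by rwa [length_infSegment])
  refine (isPrefixOfInf_infSegment_zero x (n + d)).of_prefix_s9 ?_
  rw [infSegment_add, zero_add]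
  exact (List.prefix_append_right_inj _).mpr hpow

namespace DFA

variable {σ : Type*} (M : DFA α σ)

theorem evalFrom_flatten_of_forall {q : σ} {ws : List (List α)}
    (h : ∀ w ∈ ws, M.evalFrom q w = q) : M.evalFrom q ws.flatten = q := by
  induction ws with
  | nil => rfl
  | cons w ws ih =>
    rw [List.flatten_cons, evalFrom_of_append, h w List.mem_cons_self,
      ih fun v hv => h v (List.mem_cons_of_mem w hv)]

theorem append_comm_of_evalFrom_eq [Finite α] (hM : M.accepts.HasPolyGrowth) {q : σ}
    {p s u v : List α} (hp : M.eval p = q) (hs : M.evalFrom q s ∈ M.accept)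
    (hu : M.evalFrom q u = q) (hv : M.evalFrom q v = q) : u ++ v = v ++ u := by
  refine hM.eq_of_forall_mem (p := p) (s := s) (by simp [Nat.add_comm]) fun m f => ?_
  have hcycle : ∀ w ∈ List.ofFn (fun i => if f i then u ++ v else v ++ u), M.evalFrom q w = q := by
    simp only [List.mem_ofFn, forall_exists_index]
    rintro w i rfl
    split_ifs <;> simp [evalFrom_of_append, hu, hv]
  rw [mem_accepts, eval, evalFrom_of_append, evalFrom_of_append, ← eval, hp,
    evalFrom_flatten_of_forall M hcycle]
  exact hs

theorem ultimatelyPeriodic_of_mem_adherence [Finite α] [Finite σ] (hM : M.accepts.HasPolyGrowth)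
    {x : ℕ → α} (hx : x ∈ Adherence (M.accepts : Set (List α))) : UltimatelyPeriodic x := by
  set run : ℕ → σ := fun n => M.eval (infSegment x 0 n)
  have hrun : ∀ i d, M.evalFrom (run i) (infSegment x i d) = run (i + d) := by
    intro i d
    simp only [run, eval, ← evalFrom_of_append, infSegment_add, zero_add]
  obtain ⟨q, hq⟩ := Finite.exists_infinite_fiber run
  have hqinf : (run ⁻¹' {q}).Infinite := Set.infinite_coe_iff.mp hq
  obtain ⟨i, hi : run i = q⟩ := hqinf.nonempty
  obtain ⟨_, hmem, s, rfl⟩ := hx i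
  have hs : M.evalFrom q s ∈ M.accept := by
    change M.eval _ ∈ M.accept at hmem
    rw [← infSegment_zero, eval, evalFrom_of_append, ← eval] at hmem
    rw [← hi]; exact hmem
  have hcycle : ∀ j ∈ run ⁻¹' {q}, i < j → M.evalFrom q (infSegment x i (j - i)) = q := by
    intro j hj hij
    rw [← hi, hrun, Nat.add_sub_cancel' hij.le, hi]
    exact hj
  obtain ⟨j, hj, hij⟩ := hqinf.exists_gt i
  have hu : infSegment x i (j - i) ≠ [] := by
    rw [← List.length_pos_iff, length_infSegment]; omega
  refine ⟨_, _, ultPeriodicWith_of_frequently_append_comm (n := i) hu fun N => ?_⟩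
  obtain ⟨j', hj', hij'⟩ := hqinf.exists_gt (i + N)
  exact ⟨j' - i, by omega, M.append_comm_of_evalFrom_eq hM hi hs
    (hcycle j' hj' (by omega)) (hcycle j hj hij)⟩

end DFA

end

theorem stmt9 {α : Type*} [Fintype α] (L : Language α) (hreg : L.IsRegular)
    (hpoly : ∃ k C : ℕ, ∀ n : ℕ,
      {w ∈ (L : Set (List α)) | w.length = n}.ncard ≤ C * (n + 1) ^ k) :
    (Adherence (L : Set (List α))).Countable ∧
      ∀ x ∈ Adherence (L : Set (List α)), UltimatelyPeriodic x := by
  obtain ⟨σ, _, M, rfl⟩ := hreg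
  have hperiodic : ∀ x ∈ Adherence (M.accepts : Set (List α)), UltimatelyPeriodic x :=
    fun _ hx => M.ultimatelyPeriodic_of_mem_adherence hpoly hx
  exact ⟨countable_setOf_ultimatelyPeriodic.mono hperiodic, hperiodic⟩
end

section
/- If a regular language L over a finite alphabet does not have polynomial growth, then adh(L) is uncountable and contains uncountably many aperiodic infinite words. -/
/-! Fix a DFA for `L`. If some state `q = δ(u)` on an accepting run `u · v` carries two distinct
loops `x ≠ y` of equal length, then the infinite words `u b₀ b₁ b₂ ⋯` with `bᵢ ∈ {x, y}` all lie
in `adh(L)` and are pairwise distinct, so `adh(L)` has the cardinality of `ℕ → Bool`; as there are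
only countably many ultimately periodic words, uncountably many of them are aperiodic.

Otherwise every state on an accepting run has at most one loop of each length. Cutting an
accepted word at the last return to its initial state, then at the last return to the state
after the next letter, and so on, writes it as loop, letter, loop, letter, …, loop through pairwise
distinct states. The word is determined by these at most `|Q|` letters and the loop lengths,
one per state, which leaves at most `C (n + 1)^|Q|` words of length `n`. -/

section InfiniteWords

variable {α : Type*}

theorem IsPrefixOfInf.ofFn_prefix {l : List α} {w : ℕ → α} (h : IsPrefixOfInf l w) {n : ℕ}
    (hn : n ≤ l.length) : (List.ofFn fun i : Fin n => w i) <+: l := by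
  rw [List.prefix_iff_eq_take]
  refine List.ext_getElem (by simp [hn]) fun i hi _ => ?_
  simp only [List.getElem_ofFn, List.getElem_take]
  exact (h i _).symm

theorem IsPrefixOfInf.eq_of_length_eq {l l' : List α} {w : ℕ → α} (h : IsPrefixOfInf l w)
    (h' : IsPrefixOfInf l' w) (hl : l.length = l'.length) : l = l' :=
  List.ext_getElem hl fun i hi hi' => (h i hi).trans (h' i hi').symm

def limitWord (c : ℕ → List α) (hc : ∀ n, n ≤ (c n).length) (n : ℕ) : α :=
  (c (n + 1))[n]'(Nat.lt_of_lt_of_le n.lt_succ_self (hc _))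

theorem isPrefixOfInf_limitWord {c : ℕ → List α} (hmono : ∀ n, c n <+: c (n + 1))
    (hc : ∀ n, n ≤ (c n).length) (m : ℕ) : IsPrefixOfInf (c m) (limitWord c hc) := by
  have chain {m m' : ℕ} (h : m ≤ m') : c m <+: c m' :=
    Nat.le_induction (List.prefix_refl _) (fun k _ ih => ih.trans (hmono k)) m' h
  intro i hi
  rcases le_total m (i + 1) with h | h
  · exact (chain h).getElem hi
  · exact ((chain h).getElem _).symm

instance : Uncountable (ℕ → Bool) := by
  rw [← not_countable_iff, ← Cardinal.mk_le_aleph0_iff, not_le]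
  simpa using Cardinal.cantor Cardinal.aleph0

def codingPrefix (u x y : List α) (s : ℕ → Bool) (m : ℕ) : List α :=
  u ++ (List.range m).flatMap fun i => bif s i then x else y

theorem codingPrefix_succ (u x y : List α) (s : ℕ → Bool) (m : ℕ) :
    codingPrefix u x y s (m + 1) = codingPrefix u x y s m ++ bif s m then x else y := by
  simp [codingPrefix, List.range_succ, List.flatMap_append]

theorem length_codingPrefix {u x y : List α} (hlen : x.length = y.length) (s : ℕ → Bool)
    (m : ℕ) : (codingPrefix u x y s m).length = u.length + m * x.length := by
  induction m with
  | zero => simp [codingPrefix]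
  | succ m ih =>
    rw [codingPrefix_succ, List.length_append, ih]
    cases s m <;> simp [hlen] <;> ring

theorem le_length_codingPrefix (u : List α) {x y : List α} (hlen : x.length = y.length)
    (hne : x ≠ y) (s : ℕ → Bool) (m : ℕ) : m ≤ (codingPrefix u x y s m).length := by
  have hx : 0 < x.length := by
    refine List.length_pos_iff.2 fun hx => hne ?_
    rw [hx, eq_comm, ← List.length_eq_zero_iff, ← hlen, hx, List.length_nil]
  rw [length_codingPrefix hlen]
  nlinarith

theorem exists_injective_of_isPrefixOfInf_codingPrefix (u : List α) {x y : List α}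
    (hlen : x.length = y.length) (hne : x ≠ y) :
    ∃ W : (ℕ → Bool) → ℕ → α, Function.Injective W ∧
      ∀ s m, IsPrefixOfInf (codingPrefix u x y s m) (W s) := by
  have hc := le_length_codingPrefix u hlen hne
  have hpre (s : ℕ → Bool) := isPrefixOfInf_limitWord
    (fun m => (codingPrefix_succ u x y s m).symm ▸ List.prefix_append _ _) (hc s)
  refine ⟨fun s => limitWord _ (hc s), fun s t hst => funext fun i => ?_, hpre⟩
  have hi : codingPrefix u x y s (i + 1) = codingPrefix u x y t (i + 1) := by
    refine (hpre s (i + 1)).eq_of_length_eq ?_ (by simp only [length_codingPrefix hlen])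
    dsimp only at hst
    rw [hst]
    exact hpre t (i + 1)
  rw [codingPrefix_succ, codingPrefix_succ] at hi
  have hblock := (List.append_inj' hi (by cases s i <;> cases t i <;> simp [hlen])).2
  revert hblock
  cases s i <;> cases t i <;> simp [hne, hne.symm]

end InfiniteWords

namespace DFA

variable {α σ : Type*} (M : DFA α σ)

def HasUniqueLoops (q : σ) : Prop :=
  ∀ x y : List α, M.evalFrom q x = q → M.evalFrom q y = q → x.length = y.length → x = y

noncomputable def loopOfLength (q : σ) (n : ℕ) : List α :=
  Classical.epsilon fun x => x.length = n ∧ M.evalFrom q x = q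

noncomputable def expandLoops (f : σ → ℕ) : σ → List α → List α
  | p, [] => M.loopOfLength p (f p)
  | p, a :: r => M.loopOfLength p (f p) ++ a :: expandLoops f (M.step p a) r

variable {M}

theorem evalFrom_append_of_loop {p : σ} {x : List α} (hx : M.evalFrom p x = p) (z : List α) :
    M.evalFrom p (x ++ z) = M.evalFrom p z := by
  rw [evalFrom_of_append, hx]

theorem evalFrom_flatten_of_loops {q : σ} {l : List (List α)}
    (h : ∀ x ∈ l, M.evalFrom q x = q) : M.evalFrom q l.flatten = q := by
  induction l with
  | nil => rfl
  | cons x l ih =>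
    rw [List.flatten_cons, evalFrom_append_of_loop (h x List.mem_cons_self)]
    exact ih fun y hy => h y (List.mem_cons_of_mem x hy)

theorem HasUniqueLoops.loopOfLength_eq {q : σ} (hq : M.HasUniqueLoops q) {x : List α}
    (hx : M.evalFrom q x = q) : M.loopOfLength q x.length = x :=
  have h : (M.loopOfLength q x.length).length = x.length ∧
      M.evalFrom q (M.loopOfLength q x.length) = q :=
    Classical.epsilon_spec (p := fun y => y.length = x.length ∧ M.evalFrom q y = q) ⟨x, rfl, hx⟩
  hq _ _ h.2 hx h.1

theorem forall_prefix_evalFrom_step {P : σ → Prop} {p : σ} {x w : List α} {a : α}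
    (hx : M.evalFrom p x = p) (h : ∀ z, z <+: x ++ a :: w → P (M.evalFrom p z)) :
    ∀ z, z <+: w → P (M.evalFrom (M.step p a) z) := fun z hz =>
  evalFrom_append_of_loop hx (a :: z) ▸
    h _ ((List.prefix_append_right_inj x).2 (List.cons_prefix_cons.2 ⟨rfl, hz⟩))

variable (M)

theorem exists_eq_append_last_visit (p : σ) (w : List α) :
    ∃ x w', w = x ++ w' ∧ M.evalFrom p x = p ∧ ∀ z, z <+: w' → z ≠ [] → M.evalFrom p z ≠ p := by
  induction w using List.reverseRecOn with
  | nil => exact ⟨[], [], rfl, rfl, fun z hz hne => absurd (List.prefix_nil.1 hz) hne⟩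
  | append_singleton w a ih =>
    by_cases hp : M.evalFrom p (w ++ [a]) = p
    · exact ⟨w ++ [a], [], by simp, hp, fun z hz hne => absurd (List.prefix_nil.1 hz) hne⟩
    obtain ⟨x, w', rfl, hx, hlast⟩ := ih
    refine ⟨x, w' ++ [a], by simp, hx, fun z hz hne => ?_⟩
    rcases List.prefix_concat_iff.1 hz with rfl | hz
    · rwa [← evalFrom_append_of_loop hx, ← List.append_assoc]
    · exact hlast z hz hne

/-- `S` holds the states already passed: the run of `w` avoids them, so the loop lengths may be
changed freely on `S`. -/
theorem exists_expandLoops_eq [Fintype σ] (w : List α) (p : σ) (S : Finset σ)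
    (hloops : ∀ z, z <+: w → M.HasUniqueLoops (M.evalFrom p z))
    (hS : ∀ z, z <+: w → M.evalFrom p z ∉ S) :
    ∃ (r : List α) (f : σ → ℕ), r.length + S.card < Fintype.card σ ∧ (∀ q, f q ≤ w.length) ∧
      ∀ g : σ → ℕ, Set.EqOn g f (↑S)ᶜ → M.expandLoops g p r = w := by
  classical
  have hpS : p ∉ S := hS [] List.nil_prefix
  have hp : M.HasUniqueLoops p := hloops [] List.nil_prefix
  obtain ⟨x, w', hw, hx, hlast⟩ := M.exists_eq_append_last_visit p w
  cases w' with
  | nil =>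
    subst hw
    refine ⟨[], fun _ => x.length, by simpa using Finset.card_lt_univ_of_notMem hpS, by simp,
      fun g hg => ?_⟩
    rw [expandLoops, hg hpS, hp.loopOfLength_eq hx, List.append_nil]
  | cons a w' =>
    have hlt : w'.length < w.length := by simp [hw]; omega
    subst hw
    obtain ⟨r, f, hcard, hf, hexp⟩ := exists_expandLoops_eq w' (M.step p a) (insert p S)
      (forall_prefix_evalFrom_step hx hloops) fun z hz => by
        rw [Finset.mem_insert, not_or]
        exact ⟨hlast (a :: z) (List.cons_prefix_cons.2 ⟨rfl, hz⟩) (List.cons_ne_nil _ _),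
          forall_prefix_evalFrom_step (P := (· ∉ S)) hx hS z hz⟩
    rw [Finset.card_insert_of_notMem hpS] at hcard
    refine ⟨a :: r, Function.update f p x.length, by simp only [List.length_cons]; omega,
      fun q => ?_, fun g hg => ?_⟩
    · have := hf q
      rw [Function.update_apply]
      split_ifs <;> simp only [List.length_append, List.length_cons] <;> omega
    · have hgp : g p = x.length := by simpa using hg hpS
      have hrest : M.expandLoops g (M.step p a) r = w' := hexp g fun q hq => by
        simp only [Set.mem_compl_iff, Finset.coe_insert, Set.mem_insert_iff, not_or] at hq
        rw [hg hq.2, Function.update_of_ne hq.1]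
      rw [expandLoops, hgp, hp.loopOfLength_eq hx, hrest]
termination_by w.length
decreasing_by omega

theorem exists_ncard_le_of_hasUniqueLoops [Finite α] [Fintype σ]
    (h : ∀ u v, u ++ v ∈ M.accepts → M.HasUniqueLoops (M.eval u)) :
    ∃ k C : ℕ, ∀ n : ℕ,
      {w ∈ (M.accepts : Set (List α)) | w.length = n}.ncard ≤ C * (n + 1) ^ k := by
  classical
  set R := (List.finite_length_le α (Fintype.card σ)).toFinset
  refine ⟨Fintype.card σ, R.card, fun n => ?_⟩
  set F := (R ×ˢ (Finset.univ : Finset (σ → Fin (n + 1)))).image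
    fun rf => M.expandLoops (fun q => rf.2 q) M.start rf.1
  have hsub : {w ∈ (M.accepts : Set (List α)) | w.length = n} ⊆ F := by
    rintro w ⟨hw, rfl⟩
    obtain ⟨r, f, hcard, hf, hexp⟩ := M.exists_expandLoops_eq w M.start ∅
      (fun z ⟨t, hzt⟩ => h z t (hzt ▸ hw)) (fun _ _ => Finset.notMem_empty _)
    refine Finset.mem_image.2
      ⟨(r, fun q => ⟨f q, Nat.lt_succ_of_le (hf q)⟩), ?_, hexp _ fun _ _ => rfl⟩
    simp only [Finset.mem_product, Finset.mem_univ, and_true, R, Set.Finite.mem_toFinset]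
    simp only [Finset.card_empty, add_zero] at hcard
    exact hcard.le
  calc {w ∈ (M.accepts : Set (List α)) | w.length = n}.ncard
      ≤ F.card := by simpa using Set.ncard_le_ncard hsub F.finite_toSet
    _ ≤ (R ×ˢ (Finset.univ : Finset (σ → Fin (n + 1)))).card := Finset.card_image_le
    _ = R.card * (n + 1) ^ Fintype.card σ := by simp

theorem eval_codingPrefix {u x y : List α} (hx : M.evalFrom (M.eval u) x = M.eval u)
    (hy : M.evalFrom (M.eval u) y = M.eval u) (s : ℕ → Bool) (m : ℕ) :
    M.eval (codingPrefix u x y s m) = M.eval u := by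
  rw [codingPrefix, List.flatMap_def]
  refine (M.evalFrom_of_append _ _ _).trans (evalFrom_flatten_of_loops ?_)
  simp only [List.mem_map]
  rintro _ ⟨i, -, rfl⟩
  cases s i <;> assumption

theorem not_countable_adherence {u v x y : List α} (huv : u ++ v ∈ M.accepts)
    (hx : M.evalFrom (M.eval u) x = M.eval u) (hy : M.evalFrom (M.eval u) y = M.eval u)
    (hlen : x.length = y.length) (hne : x ≠ y) :
    ¬ (Adherence (M.accepts : Set (List α))).Countable := by
  obtain ⟨W, hinj, hW⟩ := exists_injective_of_isPrefixOfInf_codingPrefix u hlen hne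
  have hmem (s : ℕ → Bool) : W s ∈ Adherence (M.accepts : Set (List α)) := fun n => by
    refine ⟨codingPrefix u x y s n ++ v, ?_,
      ((hW s n).ofFn_prefix ?_).trans (List.prefix_append _ _)⟩
    · have hacc : M.eval (codingPrefix u x y s n ++ v) = M.eval (u ++ v) := by
        rw [eval, evalFrom_of_append, evalFrom_of_append]
        exact congrArg (M.evalFrom · v) (M.eval_codingPrefix hx hy s n)
      exact (M.mem_accepts).2 (hacc ▸ (M.mem_accepts).1 huv)
    · exact le_length_codingPrefix u hlen hne s n
  exact fun hA => Set.not_countable_univ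
    ((Set.mapsTo_univ_iff.2 hmem).countable_of_injOn hinj.injOn hA)

end DFA

theorem stmt10 {α : Type*} [Fintype α] (L : Language α) (hreg : L.IsRegular)
    (hnotpoly : ¬ ∃ k C : ℕ, ∀ n : ℕ,
      {w ∈ (L : Set (List α)) | w.length = n}.ncard ≤ C * (n + 1) ^ k) :
    ¬ (Adherence (L : Set (List α))).Countable ∧
      ¬ {x ∈ Adherence (L : Set (List α)) | ¬ UltimatelyPeriodic x}.Countable := by
  obtain ⟨σ, _, M, rfl⟩ := hreg
  by_cases hloops : ∀ u v, u ++ v ∈ M.accepts → M.HasUniqueLoops (M.eval u)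
  · exact absurd (M.exists_ncard_le_of_hasUniqueLoops hloops) hnotpoly
  simp only [DFA.HasUniqueLoops, not_forall] at hloops
  obtain ⟨u, v, huv, x, y, hx, hy, hlen, hne⟩ := hloops
  have hA := M.not_countable_adherence huv hx hy hlen hne
  exact ⟨hA, fun h => hA (h.of_sdiff countable_setOf_ultimatelyPeriodic)⟩
end

section
/- If w is an infinite word over {0,1,2} such that for every factor x of w with |x| ≥ 2 the reversal x^R is not a factor of w, then w = (σ(0)σ(1)σ(2))^ω for some permutation σ of {0,1,2}; i.e., w is one of (012)^ω, (021)^ω, (102)^ω, (120)^ω, (201)^ω, (210)^ω. -/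
lemma fin3_aux (a b c d : Fin 3) (hab : a ≠ b) (hbc : b ≠ c) (hac : a ≠ c)
    (hdb : d ≠ b) (hdc : d ≠ c) : d = a := by
  fin_cases a <;> fin_cases b <;> fin_cases c <;> fin_cases d <;> simp_all

theorem stmt13 (w : ℕ → Fin 3)
    (hw : ∀ x : List (Fin 3), InfFactorOf x w → 2 ≤ x.length → ¬ InfFactorOf x.reverse w) :
    ∃ σ : Equiv.Perm (Fin 3), ∀ n : ℕ, w n = σ ⟨n % 3, Nat.mod_lt _ (by norm_num)⟩ := by
  have fac2 : ∀ n, InfFactorOf [w n, w (n+1)] w := by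
    intro n
    exact ⟨n, by simp [List.ofFn_succ]⟩
  have h2 : ∀ n, w n ≠ w (n+1) := by
    intro n heq
    apply hw [w n, w (n+1)] (fac2 n) (by norm_num)
    simpa [heq] using fac2 n
  have h3 : ∀ n, w n ≠ w (n+2) := by
    intro n heq
    apply hw [w n, w (n+1), w (n+2)] ⟨n, by simp [List.ofFn_succ]⟩ (by norm_num)
    exact ⟨n, by simp [List.ofFn_succ, ← heq]⟩
  have h4 : ∀ n, w (n+3) = w n := by
    intro n
    exact fin3_aux (w n) (w (n+1)) (w (n+2)) (w (n+3))
      (h2 n) (h2 (n+1)) (h3 n) (Ne.symm (h3 (n+1))) (Ne.symm (h2 (n+2)))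
  have hper : ∀ k n, w (n + 3*k) = w n := by
    intro k
    induction k with
    | zero => simp
    | succ k ih =>
      intro n
      have : n + 3*(k+1) = (n + 3*k) + 3 := by ring
      rw [this, h4, ih]
  have hinj : Function.Injective (fun i : Fin 3 => w i) := by
    intro i j h
    fin_cases i <;> fin_cases j <;> simp_all <;>
      first
      | exact absurd h (h2 0)
      | exact absurd h (h3 0)
      | exact absurd h (h2 1)
      | exact absurd h (Ne.symm (h2 0))
      | exact absurd h (Ne.symm (h3 0))
      | exact absurd h (Ne.symm (h2 1))
  refine ⟨Equiv.ofBijective _ (Finite.injective_iff_bijective.mp hinj), fun n => ?_⟩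
  show w n = w (n % 3)
  conv_lhs => rw [show n = n % 3 + 3 * (n / 3) by omega]
  exact hper _ _
end

section
/- Every infinite word in the set {0012, 0112}^ω (i.e., every infinite concatenation of the blocks 0012 and 0112) has the property that for every factor x with |x| ≥ 3, the reversal x^R is not a factor. -/
def AllowedTri (p q r : Fin 3) : Prop :=
  (p = 0 ∧ q = 0 ∧ r = 1) ∨ (p = 0 ∧ q = 1 ∧ r = 1) ∨ (p = 0 ∧ q = 1 ∧ r = 2) ∨
  (p = 1 ∧ q = 1 ∧ r = 2) ∨ (p = 1 ∧ q = 2 ∧ r = 0) ∨ (p = 2 ∧ q = 0 ∧ r = 0) ∨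
  (p = 2 ∧ q = 0 ∧ r = 1)

instance (p q r : Fin 3) : Decidable (AllowedTri p q r) := by
  unfold AllowedTri; infer_instance

lemma norev : ∀ p q r : Fin 3, AllowedTri p q r → AllowedTri r q p → False := by decide

lemma aux_len (a : ℕ → Fin 2) :
    ∀ n, (((List.range n).map a).flatMap (![[0, 0, 1, 2], [0, 1, 1, 2]] : Fin 2 → List (Fin 3))).length = 4 * n := by
  intro n
  induction n with
  | zero => simp
  | succ n ih =>
    rw [List.range_succ, List.map_append, List.flatMap_append]
    rcases (show ∀ b : Fin 2, b = 0 ∨ b = 1 from by decide) (a n) with h | h <;>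
      simp [h, ih] <;> omega

lemma aux_facts (a : ℕ → Fin 2) (w : ℕ → Fin 3)
    (hw : IsInfImage (![[0, 0, 1, 2], [0, 1, 1, 2]]) a w) (n : ℕ) :
    w (4*n) = 0 ∧ w (4*n+1) ≠ 2 ∧ w (4*n+2) = 1 ∧ w (4*n+3) = 2 := by
  have hp := hw (n+1)
  unfold IsPrefixOfInf at hp
  rw [List.range_succ, List.map_append, List.flatMap_append] at hp
  have hL := aux_len a n
  set L := ((List.range n).map a).flatMap (![[0, 0, 1, 2], [0, 1, 1, 2]] : Fin 2 → List (Fin 3)) with hLdef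
  rcases (show ∀ b : Fin 2, b = 0 ∨ b = 1 from by decide) (a n) with h | h <;>
    simp only [h, List.map_cons, List.map_nil, List.flatMap_cons, List.flatMap_nil,
      Matrix.cons_val_zero, Matrix.cons_val_one, Matrix.head_cons, List.append_nil] at hp <;>
  · refine ⟨?_, ?_, ?_, ?_⟩
    · have := hp (4*n) (by simp only [List.length_append, hL, List.length_cons, List.length_nil]; omega)
      rw [List.getElem_append_right (by omega)] at this
      simpa [hL] using this.symm
    · have := hp (4*n+1) (by simp only [List.length_append, hL, List.length_cons, List.length_nil]; omega)
      rw [List.getElem_append_right (by omega)] at this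
      simp only [hL] at this
      rw [← this]
      simp
      try decide
    · have := hp (4*n+2) (by simp only [List.length_append, hL, List.length_cons, List.length_nil]; omega)
      rw [List.getElem_append_right (by omega)] at this
      simp only [hL] at this
      rw [← this]
      simp
    · have := hp (4*n+3) (by simp only [List.length_append, hL, List.length_cons, List.length_nil]; omega)
      rw [List.getElem_append_right (by omega)] at this
      simp only [hL] at this
      rw [← this]
      simp

set_option maxHeartbeats 1000000 in
lemma tri (a : ℕ → Fin 2) (w : ℕ → Fin 3)
    (hw : IsInfImage (![[0, 0, 1, 2], [0, 1, 1, 2]]) a w) (i : ℕ) :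
    AllowedTri (w i) (w (i+1)) (w (i+2)) := by
  have hf := aux_facts a w hw
  have hb : ∀ b : Fin 3, b = 0 ∨ b = 1 ∨ b = 2 := by decide
  set n := i / 4 with hn
  have hcase : i % 4 = 0 ∨ i % 4 = 1 ∨ i % 4 = 2 ∨ i % 4 = 3 := by omega
  rcases hcase with hc | hc | hc | hc
  · have h0 : w i = 0 := by rw [show i = 4*n by omega]; exact (hf n).1
    have h1 : w (i+1) ≠ 2 := by rw [show i+1 = 4*n+1 by omega]; exact (hf n).2.1
    have h2 : w (i+2) = 1 := by rw [show i+2 = 4*n+2 by omega]; exact (hf n).2.2.1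
    rcases hb (w (i+1)) with h | h | h <;> unfold AllowedTri <;> tauto
  · have h0 : w i ≠ 2 := by rw [show i = 4*n+1 by omega]; exact (hf n).2.1
    have h1 : w (i+1) = 1 := by rw [show i+1 = 4*n+2 by omega]; exact (hf n).2.2.1
    have h2 : w (i+2) = 2 := by rw [show i+2 = 4*n+3 by omega]; exact (hf n).2.2.2
    rcases hb (w i) with h | h | h <;> unfold AllowedTri <;> tauto
  · have h0 : w i = 1 := by rw [show i = 4*n+2 by omega]; exact (hf n).2.2.1
    have h1 : w (i+1) = 2 := by rw [show i+1 = 4*n+3 by omega]; exact (hf n).2.2.2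
    have h2 : w (i+2) = 0 := by rw [show i+2 = 4*(n+1) by omega]; exact (hf (n+1)).1
    unfold AllowedTri; tauto
  · have h0 : w i = 2 := by rw [show i = 4*n+3 by omega]; exact (hf n).2.2.2
    have h1 : w (i+1) = 0 := by rw [show i+1 = 4*(n+1) by omega]; exact (hf (n+1)).1
    have h2 : w (i+2) ≠ 2 := by rw [show i+2 = 4*(n+1)+1 by omega]; exact (hf (n+1)).2.1
    rcases hb (w (i+2)) with h | h | h <;> unfold AllowedTri <;> tauto

theorem stmt14 (a : ℕ → Fin 2) (w : ℕ → Fin 3)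
    (hw : IsInfImage (![[0, 0, 1, 2], [0, 1, 1, 2]]) a w) :
    ∀ x : List (Fin 3), InfFactorOf x w → 3 ≤ x.length → ¬ InfFactorOf x.reverse w := by
  intro x hx h3 hxr
  obtain ⟨i, hi⟩ := hx
  obtain ⟨j, hj⟩ := hxr
  have hlr : x.reverse.length = x.length := x.length_reverse
  have gx : ∀ k (hk : k < x.length), x[k] = w (i + k) := by
    intro k hk
    rw [List.getElem_of_eq hi hk, List.getElem_ofFn]
  have gxr : ∀ k (hk : k < x.reverse.length), x.reverse[k] = w (j + k) := by
    intro k hk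
    rw [List.getElem_of_eq hj hk, List.getElem_ofFn]
  have hrev : ∀ k, k < x.length → w (j + k) = w (i + (x.length - 1 - k)) := by
    intro k hk
    have h1 := gxr k (by omega)
    rw [List.getElem_reverse] at h1
    rw [← h1, gx (x.length - 1 - k) (by omega)]
  have r0 := hrev (x.length - 3) (by omega)
  have r1 := hrev (x.length - 2) (by omega)
  have r2 := hrev (x.length - 1) (by omega)
  rw [show x.length - 1 - (x.length - 3) = 2 by omega] at r0
  rw [show x.length - 1 - (x.length - 2) = 1 by omega] at r1
  rw [show x.length - 1 - (x.length - 1) = 0 by omega, Nat.add_zero] at r2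
  have t1 := tri a w hw i
  have t2 := tri a w hw (j + (x.length - 3))
  rw [show j + (x.length - 3) + 1 = j + (x.length - 2) by omega,
      show j + (x.length - 3) + 2 = j + (x.length - 1) by omega, r0, r1, r2] at t2
  exact norev _ _ _ t1 t2
end

section
/- There exists an aperiodic infinite word w over {0,1,2} such that for every factor x of w with |x| ≥ 3, the reversal x^R is not a factor of w. -/
namespace S15

/-- choice function: true near perfect squares -/
def c (n : ℕ) : Bool := decide (n - (Nat.sqrt n)^2 < 4)

/-- transition of the automaton on pairs -/
def f (s : Fin 3 × Fin 3) (n : ℕ) : Fin 3 :=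
  if s = (0,0) then 1 else if s = (0,1) then 2 else if s = (1,2) then 0
  else if s = (2,0) then (if c n then 0 else 1) else 0

/-- pair-state sequence -/
def pw : ℕ → Fin 3 × Fin 3
  | 0 => (0,0)
  | n+1 => ((pw n).2, f (pw n) n)

/-- the infinite word -/
def w (n : ℕ) : Fin 3 := (pw n).1

lemma w_succ (n : ℕ) : w (n+1) = (pw n).2 := rfl
lemma pw_eq (n : ℕ) : pw n = (w n, w (n+1)) := by rw [w_succ]; rfl
lemma w_succ2 (n : ℕ) : w (n+2) = f (pw n) n := rfl
lemma pw_step (m : ℕ) : pw (m+1) = ((pw m).2, f (pw m) m) := rfl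

def P (s : Fin 3 × Fin 3) : Prop := s = (0,0) ∨ s = (0,1) ∨ s = (1,2) ∨ s = (2,0)

lemma invP : ∀ n, P (pw n) := by
  intro n
  induction n with
  | zero => left; rfl
  | succ n ih =>
    show P ((pw n).2, f (pw n) n)
    rcases ih with h | h | h | h <;> rw [h] <;> simp [f, P]

def F (t : Fin 3 × Fin 3 × Fin 3) : Prop :=
  t = (0,0,1) ∨ t = (0,1,2) ∨ t = (1,2,0) ∨ t = (2,0,0) ∨ t = (2,0,1)

instance : DecidablePred F := fun t => by unfold F; infer_instance

lemma tripF (n : ℕ) : F (w n, w (n+1), w (n+2)) := by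
  have h2 : w (n+2) = f (pw n) n := rfl
  have h01 : (w n, w (n+1)) = pw n := (pw_eq n).symm
  rcases invP n with h | h | h | h <;>
    · rw [h] at h01
      rw [h2, h, Prod.mk.injEq] at *
      simp [f, F, h01.1, h01.2]

lemma F_notrev : ∀ a b c : Fin 3, F (a,b,c) → F (c,b,a) → False := by decide

/-- a (2,0)-state within any 4 consecutive positions -/
lemma state20 (n : ℕ) : ∃ d ≤ 3, pw (n + d) = (2, 0) := by
  rcases invP n with h | h | h | h
  · refine ⟨3, by norm_num, ?_⟩
    have h1 : pw (n+1) = (0,1) := by rw [pw_step n, h]; simp [f]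
    have h2 : pw (n+2) = (1,2) := by
      rw [show n+2 = (n+1)+1 from rfl, pw_step (n+1), h1]; simp [f]
    rw [show n+3 = (n+2)+1 from rfl, pw_step (n+2), h2]; simp [f]
  · refine ⟨2, by norm_num, ?_⟩
    have h1 : pw (n+1) = (1,2) := by rw [pw_step n, h]; simp [f]
    rw [show n+2 = (n+1)+1 from rfl, pw_step (n+1), h1]; simp [f]
  · refine ⟨1, by norm_num, ?_⟩
    rw [pw_step n, h]; simp [f]
  · exact ⟨0, by norm_num, h⟩

lemma occ_of_state (n : ℕ) (h : pw n = (2,0)) (hc : c n = true) :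
    w (n+1) = 0 ∧ w (n+2) = 0 := by
  constructor
  · rw [w_succ, h]
  · rw [w_succ2, h]; simp [f, hc]

lemma cn_of_occ (m : ℕ) (hm : 1 ≤ m) (h0 : w m = 0) (h1 : w (m+1) = 0) :
    c (m-1) = true := by
  obtain ⟨n, rfl⟩ : ∃ n, m = n + 1 := ⟨m - 1, by omega⟩
  simp only [Nat.add_sub_cancel]
  have h2 : w (n+2) = f (pw n) n := rfl
  have h01 : pw n = (w n, w (n+1)) := pw_eq n
  rcases invP n with h | h | h | h <;> rw [h] at h01 h2 <;>
    simp only [Prod.mk.injEq] at h01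
  · rw [show n+1+1 = n+2 from rfl, h2] at h1
    simp [f] at h1
  · rw [h0] at h01; exact absurd h01.2 (by decide)
  · rw [h0] at h01; exact absurd h01.2 (by decide)
  · rw [show n+1+1 = n+2 from rfl, h2] at h1
    by_cases hc : c n
    · exact hc
    · simp [f, hc] at h1

lemma sqrt_eq_of (k n : ℕ) (h1 : k^2 ≤ n) (h2 : n < (k+1)^2) : Nat.sqrt n = k := by
  have a : k ≤ Nat.sqrt n := Nat.le_sqrt.2 (by nlinarith)
  have b : Nat.sqrt n < k + 1 := Nat.sqrt_lt.2 (by nlinarith)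
  omega

lemma c_true (k n : ℕ) (hk : 2 ≤ k) (h1 : k^2 ≤ n) (h2 : n ≤ k^2 + 3) : c n = true := by
  have hs : Nat.sqrt n = k := sqrt_eq_of k n h1 (by nlinarith)
  simp [c, hs]; omega

lemma c_false (k m : ℕ) (h1 : k^2 + 3 < m) (h2 : m < (k+1)^2) : c m = false := by
  have hs : Nat.sqrt m = k := sqrt_eq_of k m (by omega) h2
  simp [c, hs]; omega

lemma flat_get {α : Type*} (z : List α) (hz : z ≠ []) :
    ∀ (m i : ℕ) (h : i < ((List.replicate m z).flatten).length),
      ((List.replicate m z).flatten)[i]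
        = z[i % z.length]'(Nat.mod_lt _ (List.length_pos_iff.2 hz)) := by
  intro m
  induction m with
  | zero => intro i h; simp at h
  | succ m ih =>
    intro i h
    have hrep : (List.replicate (m+1) z).flatten = z ++ (List.replicate m z).flatten := by
      simp [List.replicate_succ]
    by_cases hi : i < z.length
    · have : i % z.length = i := Nat.mod_eq_of_lt hi
      simp_rw [hrep]
      rw [List.getElem_append_left hi]
      congr 1
      omega
    · push_neg at hi
      have hlen : i - z.length < ((List.replicate m z).flatten).length := by
        simp_rw [hrep] at h
        simp only [List.length_append] at h
        omega
      simp_rw [hrep]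
      rw [List.getElem_append_right hi, ih (i - z.length) hlen]
      congr 1
      exact ((Nat.mod_eq_sub_mod hi)).symm

lemma flat_len {α : Type*} (z : List α) (m : ℕ) :
    ((List.replicate m z).flatten).length = m * z.length := by
  simp [List.length_flatten, List.map_replicate, List.sum_replicate, smul_eq_mul]

lemma pointwise {α : Type*} (w : ℕ → α) (y z : List α)
    (h : ∀ m : ℕ, ∀ (i : ℕ) (hi : i < (y ++ (List.replicate m z).flatten).length),
         (y ++ (List.replicate m z).flatten)[i] = w i)
    (hz : z ≠ []) :
    ∀ n, y.length ≤ n → w (n + z.length) = w n := by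
  intro n hn
  have hq0 : 0 < z.length := List.length_pos_iff.2 hz
  set m := n + z.length + 1 with hm
  have hlen : (y ++ (List.replicate m z).flatten).length = y.length + m * z.length := by
    simp [flat_len]
  have hn1 : n < (y ++ (List.replicate m z).flatten).length := by rw [hlen]; nlinarith
  have hn2 : n + z.length < (y ++ (List.replicate m z).flatten).length := by
    rw [hlen]; nlinarith
  have a1 : w n = z[(n - y.length) % z.length]'(Nat.mod_lt _ hq0) := by
    rw [← h m n hn1, List.getElem_append_right hn, flat_get z hz]
  have a2 : w (n + z.length) = z[(n + z.length - y.length) % z.length]'(Nat.mod_lt _ hq0) := by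
    rw [← h m (n + z.length) hn2, List.getElem_append_right (by omega), flat_get z hz]
  rw [a1, a2]
  congr 1
  have e : n + z.length - y.length = (n - y.length) + z.length := by omega
  rw [e, Nat.add_mod_right]

lemma aperiodic : ¬ UltimatelyPeriodic w := by
  rintro ⟨y, z, hz, hpre⟩
  have hper : ∀ n, y.length ≤ n → w (n + z.length) = w n :=
    pointwise w y z (fun m i hi => hpre m i hi) hz
  set q := z.length with hqdef
  have hq1 : 1 ≤ q := List.length_pos_iff.2 hz
  set k := y.length + q + 4 with hk
  obtain ⟨d, hd, hst⟩ := state20 (k^2)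
  set n := k^2 + d with hn
  have hkk : k ≤ k^2 := Nat.le_self_pow (by norm_num) k
  have hc : c n = true := c_true k n (by omega) (by omega) (by omega)
  obtain ⟨h0, h1⟩ := occ_of_state n hst hc
  set p := n + 1 with hp
  have hpN : y.length ≤ p := by omega
  -- the word reads 0 0 1 2 starting at p
  have s1 : pw (n+1) = (0,0) := by rw [pw_step n, hst]; simp [f, hc]
  have s2 : pw (n+2) = (0,1) := by
    rw [show n+2 = (n+1)+1 from rfl, pw_step (n+1), s1]; simp [f]
  have s3 : pw (n+3) = (1,2) := by
    rw [show n+3 = (n+2)+1 from rfl, pw_step (n+2), s2]; simp [f]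
  have v2 : w (p+2) = 1 := by show (pw (n+3)).1 = 1; rw [s3]
  have v3 : w (p+3) = 2 := by
    show (pw (n+4)).1 = 2
    rw [show n+4 = (n+3)+1 from rfl, pw_step (n+3), s3]
  -- periodicity propagates the 00-occurrence
  have e0 : w (p + q) = 0 := by rw [hper p hpN]; exact h0
  have e1 : w (p + q + 1) = 0 := by
    rw [show p + q + 1 = (p+1) + q by ring, hper (p+1) (by omega)]
    exact h1
  rcases Nat.lt_or_ge q 4 with hq4 | hq4
  · -- small periods: direct contradiction with the letters 1, 2 after 00
    interval_cases q
    · rw [show p + 1 + 1 = p + 2 from rfl, v2] at e1; exact absurd e1 (by decide)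
    · rw [show p + 2 = p + 2 from rfl, v2] at e0; exact absurd e0 (by decide)
    · rw [v3] at e0; exact absurd e0 (by decide)
  · -- large periods: position p+q-1 is not near a square
    have hco : c (p + q - 1) = true := cn_of_occ (p + q) (by omega) e0 e1
    have hcf : c (p + q - 1) = false := by
      apply c_false k
      · omega
      · have : p + q - 1 = k^2 + d + q := by omega
        rw [this]
        nlinarith
    rw [hco] at hcf
    exact absurd hcf (by decide)

lemma noRev (x : List (Fin 3)) (hx : InfFactorOf x w) (hlen : 3 ≤ x.length) :
    ¬ InfFactorOf x.reverse w := by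
  rintro ⟨i', hx'⟩
  obtain ⟨i, hxe⟩ := hx
  have hxg : ∀ j (hj : j < x.length), x[j] = w (i + j) := by
    intro j hj
    rw [List.getElem_of_eq hxe hj, List.getElem_ofFn]
  have hrg : ∀ j (hj : j < x.length), w (i' + j) = w (i + (x.length - 1 - j)) := by
    intro j hj
    have hj' : j < x.reverse.length := by simpa using hj
    have := List.getElem_of_eq hx' hj'
    rw [List.getElem_ofFn] at this
    rw [← this, List.getElem_reverse, hxg _ (by omega)]
  set a := i + (x.length - 3) with ha
  have t1 : F (w a, w (a+1), w (a+2)) := tripF a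
  have t2 : F (w i', w (i'+1), w (i'+2)) := tripF i'
  have r0 : w i' = w (a+2) := by
    have := hrg 0 (by omega)
    rw [show i + (x.length - 1 - 0) = a + 2 by omega] at this
    exact this
  have r1 : w (i'+1) = w (a+1) := by
    have := hrg 1 (by omega)
    rw [show i + (x.length - 1 - 1) = a + 1 by omega] at this
    exact this
  have r2 : w (i'+2) = w a := by
    have := hrg 2 (by omega)
    rw [show i + (x.length - 1 - 2) = a by omega] at this
    exact this
  rw [r0, r1, r2] at t2
  exact F_notrev _ _ _ t1 t2

end S15

theorem stmt15 :
    ∃ w : ℕ → Fin 3, ¬ UltimatelyPeriodic w ∧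
      ∀ x : List (Fin 3), InfFactorOf x w → 3 ≤ x.length → ¬ InfFactorOf x.reverse w := by
  exact ⟨S15.w, S15.aperiodic, fun x hx h3 => S15.noRev x hx h3⟩
end

section
/- The infinite binary word w = 000011(010011)^ω has the property that for every factor x of w with |x| ≥ 5, the reversal x^R is not a factor of w. -/
theorem stmt17 (w : ℕ → Fin 2)
    (hw : ∀ n, w n = if n < 6 then ([0, 0, 0, 0, 1, 1] : List (Fin 2)).getD n 0
                     else ([0, 1, 0, 0, 1, 1] : List (Fin 2)).getD ((n - 6) % 6) 0) :
    ∀ x : List (Fin 2), InfFactorOf x w → 5 ≤ x.length → ¬ InfFactorOf x.reverse w := by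

  have hP : ∀ n, 6 ≤ n → w n = w (6 + (n - 6) % 6) := by
    intro n hn
    rw [hw, hw]
    have h1 : ¬ n < 6 := by omega
    have h2 : ¬ 6 + (n - 6) % 6 < 6 := by omega
    simp only [h1, h2, if_false]
    congr 1
    omega
  have canon : ∀ i : ℕ, ∃ i' : Fin 12, ∀ k, k < 5 → w (i + k) = w ((i' : ℕ) + k) := by
    intro i
    by_cases h : i < 12
    · exact ⟨⟨i, h⟩, fun k _ => rfl⟩
    · refine ⟨⟨6 + (i - 6) % 6, by omega⟩, fun k hk => ?_⟩
      rw [hP (i + k) (by omega), hP (6 + (i - 6) % 6 + k) (by omega)]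
      congr 1
      omega
  have L : ∀ i' j' : Fin 12, ∃ k : Fin 5,
      w ((i' : ℕ) + (4 - (k : ℕ))) ≠ w ((j' : ℕ) + (k : ℕ)) := by
    simp only [hw]
    decide
  rintro x ⟨i, hxi⟩ hlen ⟨j, hxj⟩
  have hx : ∀ k (hk : k < x.length), x[k] = w (i + k) := by
    intro k hk
    rw [List.getElem_of_eq hxi hk]
    simp
  have hr : ∀ k (hk : k < x.length),
      x[x.length - 1 - k]'(by omega) = w (j + k) := by
    intro k hk
    have hk' : k < x.reverse.length := by simpa using hk
    have h1 : x.reverse[k] = w (j + k) := by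
      rw [List.getElem_of_eq hxj hk']
      simp
    rw [← h1, List.getElem_reverse]
  obtain ⟨i', hi'⟩ := canon i
  obtain ⟨j', hj'⟩ := canon (j + (x.length - 5))
  obtain ⟨k, hk⟩ := L i' j'
  apply hk
  have hk5 : (k : ℕ) < 5 := k.isLt
  have e1 : w ((i' : ℕ) + (4 - (k : ℕ))) = w (i + (4 - (k : ℕ))) :=
    (hi' _ (by omega)).symm
  have e2 : w (i + (4 - (k : ℕ))) = x[4 - (k : ℕ)]'(by omega) :=
    (hx _ (by omega)).symm
  have e3 : x[4 - (k : ℕ)]'(by omega) = w (j + (x.length - 5 + (k : ℕ))) := by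
    have h0 := hr (x.length - 5 + (k : ℕ)) (by omega)
    have hidx : x.length - 1 - (x.length - 5 + (k : ℕ)) = 4 - (k : ℕ) := by omega
    rw [← h0]
    congr 1
    omega
  have e4 : w (j + (x.length - 5 + (k : ℕ))) = w (j + (x.length - 5) + (k : ℕ)) := by
    congr 1; omega
  rw [e1, e2, e3, e4, hj' _ hk5]
end

section
/- Every infinite binary word over {0,1} avoiding reversed factors of length ≥ 5 (i.e., such that no factor x with |x| ≥ 5 has x^R also a factor) is ultimately periodic. -/
namespace S18

def win (w : ℕ → Fin 2) (i n : ℕ) : List (Fin 2) := List.ofFn fun j : Fin n => w (i + j)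

@[simp] lemma win_length (w : ℕ → Fin 2) (i n : ℕ) : (win w i n).length = n := by
  simp [win]

lemma win_getElem (w : ℕ → Fin 2) (i n k : ℕ) (h : k < (win w i n).length) :
    (win w i n)[k] = w (i + k) := by
  simp [win]

lemma win_drop (w : ℕ → Fin 2) (i n a : ℕ) :
    (win w i n).drop a = win w (i + a) (n - a) := by
  apply List.ext_getElem
  · simp [win]
  · intro k h1 h2
    simp only [List.getElem_drop, win_getElem]
    congr 1
    omega

lemma win_take (w : ℕ → Fin 2) (i n L : ℕ) :
    (win w i n).take L = win w i (min L n) := by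
  apply List.ext_getElem
  · simp [win]
  · intro k h1 h2
    simp only [List.getElem_take, win_getElem]

lemma win_factor (w : ℕ → Fin 2) (i n : ℕ) : InfFactorOf (win w i n) w := by
  refine ⟨i, ?_⟩
  apply List.ext_getElem
  · simp [win]
  · intro k h1 h2
    simp [win]

def OkL (s : List (Fin 2)) : Prop :=
  ∀ (a b : Fin 5) (L : Fin 10), 5 ≤ L.val → a.val + L.val ≤ s.length → b.val + L.val ≤ s.length →
    (s.drop a.val).take L.val ≠ ((s.drop b.val).take L.val).reverse

instance : DecidablePred OkL := fun s => by unfold OkL; infer_instance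

def tbl : List (Fin 2) :=
  [0, 0, 0, 0, 0, 0, 0, 0, 0, 0, 0, 1, 0, 1, 0, 1, 1, 0, 0, 1, 0, 0, 0, 0, 1, 1, 0, 0, 0, 0, 0, 0,
   0, 0, 0, 0, 0, 1, 0, 0, 1, 1, 0, 0, 0, 0, 0, 0, 0, 0, 0, 0, 0, 0, 0, 0, 0, 0, 0, 0, 0, 0, 0, 0]

def g (u : Fin 9 → Fin 2) : Fin 2 :=
  tbl.getD ((u ⟨0, by norm_num⟩).val + 2 * (u ⟨1, by norm_num⟩).val + 4 * (u ⟨2, by norm_num⟩).val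
    + 8 * (u ⟨3, by norm_num⟩).val + 16 * (u ⟨4, by norm_num⟩).val
    + 32 * (u ⟨5, by norm_num⟩).val) 0

set_option maxRecDepth 100000 in
set_option maxHeartbeats 4000000 in
theorem fact9 : ∀ u : Fin 9 → Fin 2, OkL (List.ofFn u) → u ⟨6, by norm_num⟩ = g u := by
  decide

lemma g_congr (u v : Fin 9 → Fin 2) (h : ∀ t : Fin 9, t.val < 6 → u t = v t) : g u = g v := by
  unfold g
  rw [h ⟨0, by norm_num⟩ (by norm_num), h ⟨1, by norm_num⟩ (by norm_num),
    h ⟨2, by norm_num⟩ (by norm_num), h ⟨3, by norm_num⟩ (by norm_num),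
    h ⟨4, by norm_num⟩ (by norm_num), h ⟨5, by norm_num⟩ (by norm_num)]

lemma okwin (w : ℕ → Fin 2)
    (hw : ∀ x : List (Fin 2), InfFactorOf x w → 5 ≤ x.length → ¬ InfFactorOf x.reverse w)
    (i : ℕ) : OkL (win w i 9) := by
  intro a b L h5 ha hb heq
  rw [win_length] at ha hb
  rw [win_drop, win_drop, win_take, win_take] at heq
  rw [show min L.val (9 - a.val) = L.val by omega, show min L.val (9 - b.val) = L.val by omega]
    at heq
  have hx : InfFactorOf (win w (i + b.val) L.val) w := win_factor _ _ _
  have hlen : 5 ≤ (win w (i + b.val) L.val).length := by rw [win_length]; omega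
  exact hw _ hx hlen (heq ▸ win_factor w (i + a.val) L.val)

lemma det (w : ℕ → Fin 2)
    (hw : ∀ x : List (Fin 2), InfFactorOf x w → 5 ≤ x.length → ¬ InfFactorOf x.reverse w)
    (i j : ℕ) (h : ∀ t, t < 6 → w (i + t) = w (j + t)) : w (i + 6) = w (j + 6) := by
  have h1 : OkL (List.ofFn fun t : Fin 9 => w (i + t.val)) := okwin w hw i
  have h2 : OkL (List.ofFn fun t : Fin 9 => w (j + t.val)) := okwin w hw j
  have e1 : w (i + 6) = g (fun t : Fin 9 => w (i + t.val)) := fact9 _ h1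
  have e2 : w (j + 6) = g (fun t : Fin 9 => w (j + t.val)) := fact9 _ h2
  rw [e1, e2]
  exact g_congr _ _ (fun t ht => h t.val ht)

end S18

theorem S18.main (w : ℕ → Fin 2)
    (hw : ∀ x : List (Fin 2), InfFactorOf x w → 5 ≤ x.length → ¬ InfFactorOf x.reverse w) :
    UltimatelyPeriodic w := by
  -- two equal windows of length 6
  have main : ∃ i j : ℕ, i < j ∧ ∀ t, t < 6 → w (i + t) = w (j + t) := by
    have hcard : Fintype.card (Fin 6 → Fin 2) < Fintype.card (Fin 65) := by simp
    obtain ⟨a, b, hne, heq⟩ :=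
      Fintype.exists_ne_map_eq_of_card_lt (fun (k : Fin 65) (t : Fin 6) => w (k.val + t.val)) hcard
    have hvne : a.val ≠ b.val := fun h => hne (Fin.ext h)
    rcases lt_or_gt_of_ne hvne with hlt | hlt
    · exact ⟨a.val, b.val, hlt, fun t ht => congrFun heq ⟨t, ht⟩⟩
    · exact ⟨b.val, a.val, hlt, fun t ht => (congrFun heq ⟨t, ht⟩).symm⟩
  obtain ⟨i, j, hij, hwin⟩ := main
  have key : ∀ t, w (i + t) = w (j + t) := by
    intro t
    induction t using Nat.strong_induction_on with
    | _ t ih =>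
      rcases lt_or_ge t 6 with h | h
      · exact hwin t h
      · obtain ⟨s, rfl⟩ : ∃ s, t = s + 6 := ⟨t - 6, by omega⟩
        have hd := S18.det w hw (i + s) (j + s) (fun u hu => by
          have := ih (s + u) (by omega)
          rw [← add_assoc, ← add_assoc] at this
          exact this)
        rw [← add_assoc, ← add_assoc]
        exact hd
  set p := j - i with hp
  have hppos : 0 < p := by omega
  have per : ∀ n, i ≤ n → w (n + p) = w n := by
    intro n hn
    obtain ⟨t, rfl⟩ : ∃ t, n = i + t := ⟨n - i, by omega⟩
    have h1 := key t
    rw [show i + t + p = j + t by omega]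
    exact h1.symm
  have periter : ∀ q d, w (i + q * p + d) = w (i + d) := by
    intro q
    induction q with
    | zero => simp
    | succ q ih =>
      intro d
      rw [show i + (q + 1) * p + d = (i + q * p + d) + p by ring]
      rw [per (i + q * p + d) (by omega)]
      exact ih d
  refine ⟨List.ofFn (fun t : Fin i => w t.val), List.ofFn (fun t : Fin p => w (i + t.val)), ?_, ?_⟩
  · apply List.ne_nil_of_length_pos
    simpa using hppos
  · intro m
    induction m with
    | zero =>
      intro k hk
      simp only [List.replicate_zero, List.flatten_nil, List.append_nil] at hk ⊢
      simp only [List.getElem_ofFn]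
    | succ m ih =>
      have happ : ∀ (l z : List (Fin 2)), IsPrefixOfInf l w →
          (∀ k, k < z.length → z.getD k 0 = w (l.length + k)) → IsPrefixOfInf (l ++ z) w := by
        intro l z hl hz k hk
        by_cases hc : k < l.length
        · rw [List.getElem_append_left hc]; exact hl k hc
        · push_neg at hc
          rw [List.getElem_append_right hc]
          have hk2 : k - l.length < z.length := by
            simp only [List.length_append] at hk; omega
          have := hz (k - l.length) hk2
          rw [List.getD_eq_getElem z 0 hk2] at this
          rw [this]; congr 1; omega
      have hEq : (List.ofFn fun t : Fin i => w t.val) ++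
          (List.replicate (m + 1) (List.ofFn fun t : Fin p => w (i + t.val))).flatten =
          ((List.ofFn fun t : Fin i => w t.val) ++
            (List.replicate m (List.ofFn fun t : Fin p => w (i + t.val))).flatten) ++
          (List.ofFn fun t : Fin p => w (i + t.val)) := by
        rw [List.replicate_succ', List.flatten_append, ← List.append_assoc]
        simp
      rw [hEq]
      apply happ _ _ ih
      intro k hk
      simp only [List.length_ofFn] at hk
      rw [List.getD_eq_getElem _ 0 (by simpa using hk)]
      simp only [List.getElem_ofFn]
      have hYlen : ((List.ofFn fun t : Fin i => w t.val) ++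
          (List.replicate m (List.ofFn fun t : Fin p => w (i + t.val))).flatten).length
          = i + m * p := by
        simp [List.length_flatten, List.map_replicate, List.sum_replicate, Nat.smul_one_eq_cast]
      rw [hYlen, show i + m * p + k = i + m * p + k from rfl]
      exact (periter m k).symm

theorem stmt18 (w : ℕ → Fin 2)
    (hw : ∀ x : List (Fin 2), InfFactorOf x w → 5 ≤ x.length → ¬ InfFactorOf x.reverse w) :
    UltimatelyPeriodic w := S18.main w hw
end

section
/- The image of any infinite binary word under the morphism 0 → 0001011, 1 → 1001011 is an infinite binary word w such that for every factor x of w with |x| ≥ 6, the reversal x^R is not a factor of w; in particular, applying this morphism to the Thue–Morse word yields an aperiodic infinite binary word with this property. -/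
/-- The Thue–Morse word: `t n` is the parity of the number of 1s in the
binary expansion of `n`. -/
def thueMorse (n : ℕ) : Fin 2 :=
  ⟨(Nat.digits 2 n).count 1 % 2, Nat.mod_lt _ (by norm_num)⟩

section UniformMorphism

variable {α β : Type*} {γ : α → List β} {k : ℕ} {a : ℕ → α} {w : ℕ → β}

theorem length_flatMap_of_length_eq (hγ : ∀ c, (γ c).length = k) (l : List α) :
    (l.flatMap γ).length = k * l.length := by
  simp [hγ, mul_comm]

theorem IsInfImage.apply_mul_add (hγ : ∀ c, (γ c).length = k) (h : IsInfImage γ a w)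
    (q : ℕ) {j : ℕ} (hj : j < 2 * k) :
    w (k * q + j) = (γ (a q) ++ γ (a (q + 1)))[j]'(by rw [List.length_append, hγ, hγ]; omega) := by
  have hpre : ((List.range (q + 2)).map a).flatMap γ =
      ((List.range q).map a).flatMap γ ++ (γ (a q) ++ γ (a (q + 1))) := by
    simp [List.range_succ, List.flatMap_append]
  have hq : (((List.range q).map a).flatMap γ).length = k * q := by
    simp [length_flatMap_of_length_eq hγ]
  have hlt : k * q + j < (((List.range (q + 2)).map a).flatMap γ).length := by
    rw [length_flatMap_of_length_eq hγ, List.length_map, List.length_range]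
    nlinarith
  rw [← h (q + 2) _ hlt, List.getElem_of_eq hpre, List.getElem_append_right (by omega)]
  simp only [hq, Nat.add_sub_cancel_left]

theorem IsInfImage.exists_eq_take_drop (hk : 0 < k) (hγ : ∀ c, (γ c).length = k)
    (h : IsInfImage γ a w) {x : List β} (hx : InfFactorOf x w) (hlen : x.length ≤ k + 1) :
    ∃ c c' : α, ∃ r < k, x = ((γ c ++ γ c').drop r).take x.length := by
  obtain ⟨i, hi⟩ := hx
  refine ⟨a (i / k), a (i / k + 1), i % k, Nat.mod_lt _ hk, ?_⟩
  have hr := Nat.mod_lt i hk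
  refine List.ext_getElem ?_ fun j hj _ => ?_
  · simp only [List.length_take, List.length_drop, List.length_append, hγ]
    omega
  · rw [List.getElem_of_eq hi hj, List.getElem_ofFn, List.getElem_take, List.getElem_drop]
    show w (i + j) = _
    rw [show i + j = k * (i / k) + (i % k + j) by rw [← add_assoc, Nat.div_add_mod]]
    exact h.apply_mul_add hγ _ (by omega)

end UniformMorphism

section Factor

variable {α : Type*} {x : List α} {w : ℕ → α}

theorem InfFactorOf.take (hx : InfFactorOf x w) (n : ℕ) : InfFactorOf (x.take n) w := by
  obtain ⟨i, hi⟩ := hx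
  refine ⟨i, List.ext_getElem (by simp) fun j hj _ => ?_⟩
  simp only [List.getElem_take, List.getElem_ofFn]
  rw [List.getElem_of_eq hi, List.getElem_ofFn]

theorem InfFactorOf.drop (hx : InfFactorOf x w) (n : ℕ) : InfFactorOf (x.drop n) w := by
  obtain ⟨i, hi⟩ := hx
  refine ⟨i + n, List.ext_getElem (by simp) fun j hj _ => ?_⟩
  simp only [List.getElem_drop, List.getElem_ofFn]
  rw [List.getElem_of_eq hi, List.getElem_ofFn, add_assoc]

end Factor

theorem List.getElem_flatten_replicate {α : Type*} {z : List α} (hz : z ≠ []) (m j : ℕ)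
    (hj : j < (List.replicate m z).flatten.length) :
    (List.replicate m z).flatten[j] =
      z[j % z.length]'(Nat.mod_lt _ (List.length_pos_iff.mpr hz)) := by
  induction m generalizing j with
  | zero => simp at hj
  | succ m ih =>
    simp only [List.replicate_succ, List.flatten_cons]
    by_cases hlt : j < z.length
    · rw [List.getElem_append_left hlt]
      simp only [Nat.mod_eq_of_lt hlt]
    · rw [List.getElem_append_right (by omega), ih]
      congr 1
      conv_rhs => rw [← Nat.sub_add_cancel (not_lt.mp hlt), Nat.add_mod_right]

section Periodic

variable {α : Type*} {w : ℕ → α} {y z : List α}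

theorem UltPeriodicWith.apply_eq (h : UltPeriodicWith w y z) {n : ℕ} (hn : y.length ≤ n) :
    w n = z[(n - y.length) % z.length]'(Nat.mod_lt _ (List.length_pos_iff.mpr h.1)) := by
  have hz : 0 < z.length := List.length_pos_iff.mpr h.1
  have hlt : n < (y ++ (List.replicate (n + 1) z).flatten).length := by
    simp only [List.length_append, List.length_flatten, List.map_replicate, List.sum_replicate,
      smul_eq_mul]
    nlinarith
  rw [← h.2 (n + 1) n hlt, List.getElem_append_right hn, List.getElem_flatten_replicate h.1]

theorem UltPeriodicWith.apply_add_mul_length (h : UltPeriodicWith w y z) {n : ℕ}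
    (hn : y.length ≤ n) (m : ℕ) : w (n + m * z.length) = w n := by
  rw [h.apply_eq hn, h.apply_eq (by omega)]
  congr 1
  rw [Nat.sub_add_comm hn, Nat.add_mul_mod_self_right]

end Periodic

theorem thueMorse_two_mul (n : ℕ) : thueMorse (2 * n) = thueMorse n := by
  rcases Nat.eq_zero_or_pos n with rfl | hn
  · rfl
  · ext
    simp [thueMorse, Nat.digits_def' (by norm_num : 1 < 2) (by omega : 0 < 2 * n)]

theorem thueMorse_two_mul_add_one (n : ℕ) : thueMorse (2 * n + 1) = thueMorse n + 1 := by
  ext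
  simp [thueMorse, show (2 * n + 1) / 2 = n by omega, Fin.val_add, Nat.add_mod]

theorem thueMorse_not_eventually_periodic {p : ℕ} (hp : 0 < p) (N : ℕ) :
    ¬ ∀ n ≥ N, thueMorse (n + p) = thueMorse n := by
  induction p using Nat.strong_induction_on generalizing N with
  | _ p ih =>
    intro hper
    rcases Nat.even_or_odd' p with ⟨s, rfl | rfl⟩
    · refine ih s (by omega) (by omega) N fun n hn => ?_
      simpa only [← mul_add, thueMorse_two_mul] using hper (2 * n) (by omega)
    · -- `m` is chosen so that `m + s = 2 * j`; the shifts of `2 * m` and `2 * m + 1` by the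
      -- period give `t j + 1 = t m` and `t j + 1 = t m + 1`.
      set j := N + s
      set m := 2 * j - s
      have h₀ := hper (2 * m) (by omega)
      have h₁ := hper (2 * m + 1) (by omega)
      rw [show 2 * m + (2 * s + 1) = 2 * (2 * j) + 1 by omega,
        thueMorse_two_mul_add_one, thueMorse_two_mul, thueMorse_two_mul] at h₀
      rw [show 2 * m + 1 + (2 * s + 1) = 2 * (2 * j + 1) by omega,
        thueMorse_two_mul, thueMorse_two_mul_add_one, thueMorse_two_mul_add_one,
        add_left_inj] at h₁
      simp [h₁] at h₀

abbrev morphism7 : Fin 2 → List (Fin 2) := ![[0, 0, 0, 1, 0, 1, 1], [1, 0, 0, 1, 0, 1, 1]]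

theorem length_morphism7 (c : Fin 2) : (morphism7 c).length = 7 := by
  fin_cases c <;> rfl

theorem take_drop_morphism7_ne_reverse : ∀ (c c' d d' : Fin 2) (r r' : Fin 7),
    ((morphism7 c ++ morphism7 c').drop r).take 6 ≠
      (((morphism7 d ++ morphism7 d').drop r').take 6).reverse := by
  decide

section Morphism7

variable {a w : ℕ → Fin 2}

theorem IsInfImage.not_infFactorOf_reverse_of_length_eq_six (h : IsInfImage morphism7 a w)
    {x : List (Fin 2)} (hx : InfFactorOf x w) (hlen : x.length = 6) :
    ¬ InfFactorOf x.reverse w := by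
  intro hrx
  obtain ⟨c, c', r, hr, hxeq⟩ :=
    h.exists_eq_take_drop (by norm_num) length_morphism7 hx (by omega)
  obtain ⟨d, d', r', hr', hrxeq⟩ :=
    h.exists_eq_take_drop (by norm_num) length_morphism7 hrx (by simp [hlen])
  rw [List.length_reverse, hlen] at hrxeq
  rw [hlen] at hxeq
  exact take_drop_morphism7_ne_reverse c c' d d' ⟨r, hr⟩ ⟨r', hr'⟩
    (hxeq.symm.trans (List.reverse_eq_iff.mp hrxeq))

theorem IsInfImage.not_infFactorOf_reverse (h : IsInfImage morphism7 a w)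
    {x : List (Fin 2)} (hx : InfFactorOf x w) (hlen : 6 ≤ x.length) :
    ¬ InfFactorOf x.reverse w := by
  intro hrx
  refine h.not_infFactorOf_reverse_of_length_eq_six (hx.take 6) (by simp [hlen]) ?_
  rw [List.reverse_take]
  exact hrx.drop _

theorem IsInfImage.apply_seven_mul (h : IsInfImage morphism7 a w) (q : ℕ) : w (7 * q) = a q := by
  rw [← add_zero (7 * q), h.apply_mul_add length_morphism7 q (by norm_num)]
  generalize a q = c; generalize a (q + 1) = c'
  fin_cases c <;> fin_cases c' <;> rfl

end Morphism7

theorem stmt19 :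
    (∀ (a : ℕ → Fin 2) (w : ℕ → Fin 2),
      IsInfImage (![[0, 0, 0, 1, 0, 1, 1], [1, 0, 0, 1, 0, 1, 1]]) a w →
      ∀ x : List (Fin 2), InfFactorOf x w → 6 ≤ x.length → ¬ InfFactorOf x.reverse w) ∧
    (∀ w : ℕ → Fin 2,
      IsInfImage (![[0, 0, 0, 1, 0, 1, 1], [1, 0, 0, 1, 0, 1, 1]]) thueMorse w →
      ¬ UltimatelyPeriodic w) := by
  refine ⟨fun a w h x hx hlen => h.not_infFactorOf_reverse hx hlen, ?_⟩
  rintro w h ⟨y, z, hper⟩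
  refine thueMorse_not_eventually_periodic (List.length_pos_iff.mpr hper.1) y.length
    fun n hn => ?_
  rw [← h.apply_seven_mul, ← h.apply_seven_mul, mul_add, hper.apply_add_mul_length (by omega)]
end
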